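/- arXiv:2405.05902 — 11 statements merged into one kernel-verified Lean document; each statement's English description precedes it below -/
import Mathlib

section
/- Let Γ be a graph on n vertices whose complement has chromatic number k, and let F be a bipartite graph on k vertices containing no copy of K_{s,r} as a subgraph, where 2 ≤ s ≤ r and r > 2. Then Γ has a subgraph G with at least e(Γ)·e(F)/C(k,2) edges such that G contains no induced copy of K_{s,r}. -/
/-!
Colour `V` by a proper colouring `c` of `Γᶜ` with `k` colours, so that colour classes are cliques
of `Γ`. For a permutation `π` of the colours, keep the edges of `Γ` inside a colour class and those
between classes whose `π`-images are adjacent in `F`. An edge of `Γ` between two classes survives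
for a proportion `e(F) / C(k, 2)` of all `π`, so some `π` keeps at least `e(Γ) e(F) / C(k, 2)`
edges. In an induced `K_{s,r}` of the resulting graph, vertices on one side are non-adjacent and
hence have distinct colours, and a vertex of each side sharing a colour would force a triangle in
the bipartite graph `F`; so the colouring maps `K_{s,r}` injectively and homomorphically into `F`.
-/

open scoped Classical
open Finset SimpleGraph

namespace SimpleGraph

variable {V W : Type*}

def filterByColors (Γ : SimpleGraph V) (c : V → W) (F : SimpleGraph W) : SimpleGraph V where
  Adj u v := Γ.Adj u v ∧ (c u = c v ∨ F.Adj (c u) (c v))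
  symm := ⟨fun _ _ h ↦ ⟨h.1.symm, h.2.imp Eq.symm fun h ↦ h.symm⟩⟩
  loopless := ⟨fun _ h ↦ h.1.ne rfl⟩

section InducedFree

variable {Γ : SimpleGraph V} {c : V → W} {F : SimpleGraph W}

@[simp]
lemma filterByColors_adj {u v : V} :
    (Γ.filterByColors c F).Adj u v ↔ Γ.Adj u v ∧ (c u = c v ∨ F.Adj (c u) (c v)) :=
  Iff.rfl

lemma filterByColors_le : Γ.filterByColors c F ≤ Γ := fun _ _ h ↦ h.1

lemma exists_injective_hom_completeBipartiteGraph {s r : ℕ} (hs : 2 ≤ s) (hr : 2 < r)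
    (hF : F.CliqueFree 3) (φ : Fin s ⊕ Fin r → W)
    (hcross : ∀ x y, (completeBipartiteGraph (Fin s) (Fin r)).Adj x y →
      φ x = φ y ∨ F.Adj (φ x) (φ y))
    (hside : ∀ x y, x ≠ y → ¬ (completeBipartiteGraph (Fin s) (Fin r)).Adj x y → φ x ≠ φ y) :
    ∃ f : completeBipartiteGraph (Fin s) (Fin r) →g F, Function.Injective f := by
  -- If `φ (inl i) = φ (inr j)`, another left vertex and two further right vertices
  -- produce a triangle through that common image.
  have hinl_ne_inr : ∀ i j, φ (.inl i) ≠ φ (.inr j) := by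
    intro i j hij
    have : Nontrivial (Fin s) := Fin.nontrivial_iff_two_le.mpr hs
    obtain ⟨i', hi'⟩ := exists_ne i
    obtain ⟨j₁, hj₁, j₂, hj₂, hj₁₂⟩ := one_lt_card.mp (by simp; omega : 1 < #(univ.erase j))
    have hadj : ∀ j', j' ≠ j → F.Adj (φ (.inl i)) (φ (.inr j')) := fun j' hj' ↦
      (hcross _ _ (by simp)).resolve_left
        (hij ▸ hside (.inr j) (.inr j') (by simpa using hj'.symm) (by simp))
    have hii' : F.Adj (φ (.inl i)) (φ (.inl i')) := by
      rw [hij]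
      refine ((hcross (.inl i') (.inr j) (by simp)).resolve_left ?_).symm
      exact hij ▸ hside (.inl i') (.inl i) (by simpa using hi') (by simp)
    have hj₁₂' : φ (.inr j₁) ≠ φ (.inr j₂) := hside _ _ (by simpa using hj₁₂) (by simp)
    rw [mem_erase] at hj₁ hj₂
    rcases hcross (.inl i') (.inr j₁) (by simp) with h₁ | h₁
    · rcases hcross (.inl i') (.inr j₂) (by simp) with h₂ | h₂
      · exact hj₁₂' (h₁.symm.trans h₂)
      · exact isIndepSet_neighborSet_of_triangleFree _ hF _ hii' (hadj j₂ hj₂.1) h₂.ne h₂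
    · exact isIndepSet_neighborSet_of_triangleFree _ hF _ hii' (hadj j₁ hj₁.1) h₁.ne h₁
  have hne_of_adj : ∀ x y, (completeBipartiteGraph (Fin s) (Fin r)).Adj x y → φ x ≠ φ y := by
    rintro (i | j) (i' | j') h <;> simp at h
    exacts [hinl_ne_inr i j', (hinl_ne_inr i' j).symm]
  refine ⟨⟨φ, fun h ↦ (hcross _ _ h).resolve_left (hne_of_adj _ _ h)⟩, fun x y hφ ↦ ?_⟩
  by_contra hxy
  by_cases h : (completeBipartiteGraph (Fin s) (Fin r)).Adj x y
  exacts [hne_of_adj _ _ h hφ, hside _ _ hxy h hφ]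

theorem isEmpty_embedding_filterByColors {s r : ℕ} (hs : 2 ≤ s) (hr : 2 < r)
    (hF : F.CliqueFree 3)
    (hFfree : ¬ ∃ f : completeBipartiteGraph (Fin s) (Fin r) →g F, Function.Injective f)
    (hc : ∀ u v, c u = c v → u ≠ v → Γ.Adj u v) :
    IsEmpty (completeBipartiteGraph (Fin s) (Fin r) ↪g Γ.filterByColors c F) := by
  refine ⟨fun e ↦ hFfree (exists_injective_hom_completeBipartiteGraph hs hr hF (c ∘ e)
    (fun x y hxy ↦ (e.map_adj_iff.mpr hxy).2) fun x y hne hxy hcxy ↦ hxy ?_)⟩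
  exact e.map_adj_iff.mp ⟨hc _ _ hcxy (e.injective.ne hne), .inl hcxy⟩

end InducedFree

section PermutationCount

variable [Fintype W] (F : SimpleGraph W)

lemma card_perm_adj_eq {a b a' b' : W} (hab : a ≠ b) (hab' : a' ≠ b') :
    #{π : Equiv.Perm W | F.Adj (π a) (π b)} = #{π : Equiv.Perm W | F.Adj (π a') (π b')} := by
  obtain ⟨σ, hσa, hσb⟩ :=
    MulAction.is_two_pretransitive_iff.mp (Equiv.Perm.isMultiplyPretransitive W 2) hab' hab
  refine card_equiv (Equiv.mulRight σ) fun π ↦ ?_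
  rw [Equiv.Perm.smul_def] at hσa hσb
  simp [← hσa, ← hσb]

lemma sum_card_perm_adj :
    ∑ p : W × W, #{π : Equiv.Perm W | F.Adj (π p.1) (π p.2)} =
      (Fintype.card W).factorial * (2 * #F.edgeFinset) := by
  have hπ (π : Equiv.Perm W) : #{p : W × W | F.Adj (π p.1) (π p.2)} = 2 * #F.edgeFinset := by
    rw [two_mul_card_edgeFinset]
    exact card_equiv (π.prodCongr π) (by simp)
  simp_rw [card_filter]
  rw [sum_comm]
  simp_rw [← card_filter, hπ, sum_const, card_univ, Fintype.card_perm, smul_eq_mul]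

lemma card_perm_adj_mul_choose_two {a b : W} (hab : a ≠ b) :
    #{π : Equiv.Perm W | F.Adj (π a) (π b)} * (Fintype.card W).choose 2 =
      (Fintype.card W).factorial * #F.edgeFinset := by
  have hsum := sum_card_perm_adj F
  rw [← sum_subset (subset_univ univ.offDiag) fun p _ hp ↦ ?_,
    sum_congr rfl fun p hp ↦ card_perm_adj_eq F (mem_offDiag.mp hp).2.2 hab, sum_const,
    offDiag_card, card_univ, smul_eq_mul] at hsum
  · set n := Fintype.card W
    have h2 : 2 * n.choose 2 = n * n - n := by
      rw [Nat.choose_two_right, Nat.mul_div_cancel' (Nat.even_mul_pred_self _).two_dvd,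
        Nat.mul_sub_one]
    nlinarith
  · simp_all

end PermutationCount

section Averaging

variable [Fintype W] {Γ : SimpleGraph V}

lemma factorial_mul_card_edgeFinset_le (c : V → W) (F : SimpleGraph W) {e : Sym2 V}
    (he : e ∈ Γ.edgeSet) :
    (Fintype.card W).factorial * #F.edgeFinset ≤
      #{π : Equiv.Perm W | e ∈ (Γ.filterByColors (π ∘ c) F).edgeSet} *
        (Fintype.card W).choose 2 := by
  induction e using Sym2.ind with | _ u v =>
  rw [mem_edgeSet] at he
  by_cases hc : c u = c v
  · rw [filter_true_of_mem fun π _ ↦ ⟨he, .inl (by simp [hc])⟩, card_univ, Fintype.card_perm]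
    exact Nat.mul_le_mul_left _ F.card_edgeFinset_le_card_choose_two
  · rw [← card_perm_adj_mul_choose_two F hc]
    simp [he, hc]

variable [Fintype V]

lemma sum_card_edgeFinset_eq_sum_card_filter {ι : Type*} [Fintype ι] (G : ι → SimpleGraph V)
    (hG : ∀ i, G i ≤ Γ) :
    ∑ i, #(G i).edgeFinset = ∑ e ∈ Γ.edgeFinset, #{i | e ∈ (G i).edgeSet} :=
  (sum_congr rfl fun i _ ↦ congrArg card (by
    ext e
    simpa [bipartiteAbove] using fun h ↦ edgeSet_mono (hG i) h)).trans
    (sum_card_bipartiteAbove_eq_sum_card_bipartiteBelow (fun i e ↦ e ∈ (G i).edgeSet))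

lemma exists_perm_card_edgeFinset_mul_le (c : V → W) (F : SimpleGraph W) :
    ∃ π : Equiv.Perm W, #Γ.edgeFinset * #F.edgeFinset ≤
      #(Γ.filterByColors (π ∘ c) F).edgeFinset * (Fintype.card W).choose 2 := by
  have hsum : ∑ _π : Equiv.Perm W, #Γ.edgeFinset * #F.edgeFinset ≤
      ∑ π : Equiv.Perm W, #(Γ.filterByColors (π ∘ c) F).edgeFinset *
        (Fintype.card W).choose 2 := calc
    ∑ _π : Equiv.Perm W, #Γ.edgeFinset * #F.edgeFinset
        = ∑ _e ∈ Γ.edgeFinset, (Fintype.card W).factorial * #F.edgeFinset := by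
      simp only [sum_const, card_univ, Fintype.card_perm, smul_eq_mul]
      ring
    _ ≤ ∑ e ∈ Γ.edgeFinset, #{π : Equiv.Perm W | e ∈ (Γ.filterByColors (π ∘ c) F).edgeSet} *
          (Fintype.card W).choose 2 :=
      sum_le_sum fun e he ↦ factorial_mul_card_edgeFinset_le c F (mem_edgeFinset.mp he)
    _ = ∑ π : Equiv.Perm W, #(Γ.filterByColors (π ∘ c) F).edgeFinset *
          (Fintype.card W).choose 2 := by
      rw [← sum_mul, ← sum_mul,
        sum_card_edgeFinset_eq_sum_card_filter _ fun _ ↦ filterByColors_le]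
  obtain ⟨π, -, hπ⟩ := exists_le_of_sum_le univ_nonempty hsum
  exact ⟨π, hπ⟩

end Averaging

end SimpleGraph

theorem stmt_0_general {V : Type*} [Fintype V] (Γ : SimpleGraph V)
    (k s r : ℕ) (hs : 2 ≤ s) (hr : 2 < r)
    (hchi : Γᶜ.chromaticNumber = k)
    (F : SimpleGraph (Fin k)) (hFbip : F.Colorable 2)
    (hFfree : ¬ ∃ f : completeBipartiteGraph (Fin s) (Fin r) →g F, Function.Injective f) :
    ∃ G : SimpleGraph V, G ≤ Γ ∧
      (Γ.edgeFinset.card : ℝ) * F.edgeFinset.card / (k.choose 2) ≤ G.edgeFinset.card ∧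
      IsEmpty (completeBipartiteGraph (Fin s) (Fin r) ↪g G) := by
  obtain ⟨c⟩ := chromaticNumber_le_iff_colorable.mp hchi.le
  obtain ⟨π, hπ⟩ := exists_perm_card_edgeFinset_mul_le (Γ := Γ) c F
  rw [Fintype.card_fin] at hπ
  refine ⟨Γ.filterByColors (π ∘ c) F, filterByColors_le,
    div_le_of_le_mul₀ (by positivity) (by positivity) (by exact_mod_cast hπ), ?_⟩
  refine isEmpty_embedding_filterByColors hs hr (hFbip.cliqueFree (by norm_num)) hFfree
    fun u v huv hne ↦ of_not_not fun h ↦ c.valid ?_ (π.injective huv)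
  exact (compl_adj Γ u v).mpr ⟨hne, h⟩

theorem stmt_0 {V : Type*} [Fintype V] (Γ : SimpleGraph V)
    (k s r : ℕ) (hs : 2 ≤ s) (hsr : s ≤ r) (hr : 2 < r)
    (hchi : Γᶜ.chromaticNumber = k)
    (F : SimpleGraph (Fin k)) (hFbip : F.Colorable 2)
    (hFfree : ¬ ∃ f : completeBipartiteGraph (Fin s) (Fin r) →g F, Function.Injective f) :
    ∃ G : SimpleGraph V, G ≤ Γ ∧
      (Γ.edgeFinset.card : ℝ) * F.edgeFinset.card / (k.choose 2) ≤ G.edgeFinset.card ∧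
      IsEmpty (completeBipartiteGraph (Fin s) (Fin r) ↪g G) :=
  stmt_0_general Γ k s r hs hr hchi F hFbip hFfree
end

section
/- Let Γ be a (c,t)-sparse graph with 0 < c ≤ 1/2, let V, W ⊆ V(Γ) with |W| ≥ c^{−r}·t for a positive integer r. If R is a uniformly random r-tuple of vertices of V, then the probability that |W \ N⁺_Γ(R)| < c^r·|W| is at most r·t/|V|. -/
open scoped Classical
open Finset SimpleGraph

/-- A graph is `(c,t)`-sparse if any two vertex subsets of size at least `t` have
edge density (counting ordered pairs) at most `1 - c`. -/
def Sparse {V : Type*} [Fintype V] (Γ : SimpleGraph V) (c : ℝ) (t : ℕ) : Prop :=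
  ∀ A B : Finset V, t ≤ A.card → t ≤ B.card →
    (((A ×ˢ B).filter fun p => Γ.Adj p.1 p.2).card : ℝ) ≤ (1 - c) * A.card * B.card

/-!
Expose the entries of `R` one at a time and let `S_k` be the set of vertices of `W` adjacent
to none of the first `k`. If `|S_r| < c^r |W|`, then at some step `i` the set `S_i` still has at
least `c^i |W| ≥ t` elements while `R i` is adjacent to more than a `(1 - c)`-fraction of it.
By sparseness at most `t` vertices do that to a given `S_i`, and `S_i` depends only on the other
entries of `R`, so step `i` fails with probability at most `t / |V|`; sum over the `r` steps.
-/

theorem card_le_mul_card_pow_of_fiber_card_le {ι α : Type*} [Fintype ι] [DecidableEq ι]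
    [Fintype α] [DecidableEq α]
    (s : Finset (ι → α)) (i : ι) (t : ℕ)
    (hfiber : ∀ x ∈ s, #{y ∈ s | ∀ j ≠ i, y j = x j} ≤ t) :
    #s ≤ t * Fintype.card α ^ (Fintype.card ι - 1) := by
  let restrict : (ι → α) → ({j // j ≠ i} → α) := fun x j => x j
  calc #s ≤ t * #(s.image restrict) := by
        refine card_le_mul_card_image s t fun g hg => ?_
        obtain ⟨x, hx, rfl⟩ := mem_image.mp hg
        refine (card_le_card fun y hy => ?_).trans (hfiber x hx)
        simp only [mem_filter, restrict, funext_iff, Subtype.forall] at hy ⊢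
        exact ⟨hy.1, hy.2⟩
    _ ≤ t * Fintype.card ({j // j ≠ i} → α) := Nat.mul_le_mul_left t (card_le_univ _)
    _ = t * Fintype.card α ^ (Fintype.card ι - 1) := by
        rw [Fintype.card_fun, Fintype.card_subtype_compl, Fintype.card_subtype_eq]

theorem card_div_card_pow_le_of_fiber_card_le {ι α : Type*} [Fintype ι] [DecidableEq ι]
    [Fintype α] [DecidableEq α]
    (s : Finset (ι → α)) (i : ι) (t : ℕ)
    (hfiber : ∀ x ∈ s, #{y ∈ s | ∀ j ≠ i, y j = x j} ≤ t) :
    (#s : ℝ) / Fintype.card α ^ Fintype.card ι ≤ t / Fintype.card α := by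
  have hι : Fintype.card ι = Fintype.card ι - 1 + 1 :=
    (Nat.sub_add_cancel (Fintype.card_pos_iff.mpr ⟨i⟩)).symm
  rcases (Fintype.card α).eq_zero_or_pos with hα | hα
  · rw [hα, hι, pow_succ]; simp
  have hs : (#s : ℝ) ≤ t * (Fintype.card α : ℝ) ^ (Fintype.card ι - 1) := by
    exact_mod_cast card_le_mul_card_pow_of_fiber_card_le s i t hfiber
  rw [hι, pow_succ, ← div_div]
  gcongr
  rwa [div_le_iff₀ (by positivity)]

section Sparse

variable {Vtx : Type*} [Fintype Vtx] {Γ : SimpleGraph Vtx} {c : ℝ} {t : ℕ}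

variable (Γ c) in
noncomputable def almostDominating (S : Finset Vtx) : Finset Vtx :=
  {v | (#{w ∈ S | ¬ Γ.Adj v w} : ℝ) < c * #S}

theorem Sparse.card_almostDominating_le (hsparse : Sparse Γ c t) {S : Finset Vtx}
    (hS : t ≤ #S) : #(almostDominating Γ c S) ≤ t := by
  set B := almostDominating Γ c S
  by_contra! hB
  have hdense : ∀ v ∈ B, (1 - c) * #S < (#{w ∈ S | Γ.Adj v w} : ℝ) := fun v hv => by
    have hsplit := card_filter_add_card_filter_not (s := S) (p := fun w => Γ.Adj v w)
    have hv' := (mem_filter.mp hv).2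
    rw [← hsplit] at hv' ⊢
    push_cast at hv' ⊢
    linarith
  have hlt : ∑ _v ∈ B, (1 - c) * #S < ∑ v ∈ B, (#{w ∈ S | Γ.Adj v w} : ℝ) :=
    sum_lt_sum_of_nonempty (card_pos.mp (t.zero_le.trans_lt hB)) hdense
  have hedges : #{p ∈ B ×ˢ S | Γ.Adj p.1 p.2} = ∑ v ∈ B, #{w ∈ S | Γ.Adj v w} := by
    simp only [card_filter, sum_product]
  have hsp := hsparse B S hB.le hS
  rw [hedges] at hsp
  rw [sum_const, nsmul_eq_mul] at hlt
  push_cast at hsp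
  linarith

end Sparse

section PrefixNonNeighbors

variable {Vtx : Type*} (Γ : SimpleGraph Vtx) (W : Finset Vtx) {r : ℕ}

noncomputable def prefixNonNeighbors (x : Fin r → Vtx) (k : ℕ) : Finset Vtx :=
  {w ∈ W | ∀ i : Fin r, (i : ℕ) < k → ¬ Γ.Adj (x i) w}

theorem prefixNonNeighbors_zero (x : Fin r → Vtx) : prefixNonNeighbors Γ W x 0 = W := by
  simp [prefixNonNeighbors]

theorem prefixNonNeighbors_succ (x : Fin r → Vtx) (i : Fin r) :
    prefixNonNeighbors Γ W x (i + 1) = {w ∈ prefixNonNeighbors Γ W x i | ¬ Γ.Adj (x i) w} := by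
  ext w
  simp [prefixNonNeighbors, le_iff_lt_or_eq, or_imp, forall_and, Fin.val_inj, and_assoc]

theorem prefixNonNeighbors_congr {x y : Fin r → Vtx} {k : ℕ}
    (h : ∀ j : Fin r, (j : ℕ) < k → x j = y j) :
    prefixNonNeighbors Γ W x k = prefixNonNeighbors Γ W y k :=
  filter_congr fun _ _ => forall_congr' fun j => forall_congr' fun hj => by rw [h j hj]

theorem prefixNonNeighbors_last (x : Fin r → Vtx) :
    prefixNonNeighbors Γ W x r = {w ∈ W | ∀ i, ¬ Γ.Adj (x i) w} :=
  filter_congr fun _ _ => ⟨fun h i => h i i.isLt, fun h i _ => h i⟩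

theorem pow_mul_card_le_card_prefixNonNeighbors {x : Fin r → Vtx} {c : ℝ} {t : ℕ}
    (hc0 : 0 ≤ c) (hc1 : c ≤ 1) (htW : t ≤ c ^ r * #W)
    (hstep : ∀ i : Fin r, t ≤ #(prefixNonNeighbors Γ W x i) →
      c * #(prefixNonNeighbors Γ W x i) ≤ #(prefixNonNeighbors Γ W x (i + 1)))
    {k : ℕ} (hk : k ≤ r) : c ^ k * #W ≤ #(prefixNonNeighbors Γ W x k) := by
  induction k with
  | zero => simp [prefixNonNeighbors_zero]
  | succ k ih =>
    have hkr : k < r := hk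
    have ih := ih hkr.le
    have hlarge : (t : ℝ) ≤ #(prefixNonNeighbors Γ W x k) :=
      calc (t : ℝ) ≤ c ^ r * #W := htW
        _ ≤ c ^ k * #W := by gcongr ?_ * _; exact pow_le_pow_of_le_one hc0 hc1 hkr.le
        _ ≤ _ := ih
    calc c ^ (k + 1) * #W = c * (c ^ k * #W) := by ring
      _ ≤ c * #(prefixNonNeighbors Γ W x k) := by gcongr
      _ ≤ _ := hstep ⟨k, hkr⟩ (by exact_mod_cast hlarge)

end PrefixNonNeighbors

section SharpDrop

variable {Vtx : Type*} (Γ : SimpleGraph Vtx) (c : ℝ) (t : ℕ) (V W : Finset Vtx) {r : ℕ}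

noncomputable def sharpDropTuples (i : Fin r) : Finset (Fin r → V) :=
  {R | t ≤ #(prefixNonNeighbors Γ W (Subtype.val ∘ R) i) ∧
    (#(prefixNonNeighbors Γ W (Subtype.val ∘ R) (i + 1)) : ℝ) <
      c * #(prefixNonNeighbors Γ W (Subtype.val ∘ R) i)}

theorem filter_card_lt_subset_biUnion_sharpDropTuples (hc0 : 0 ≤ c) (hc1 : c ≤ 1)
    (htW : t ≤ c ^ r * #W) :
    ({R | (#{w ∈ W | ∀ i, ¬ Γ.Adj (R i).1 w} : ℝ) < c ^ r * #W} : Finset (Fin r → V)) ⊆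
      univ.biUnion (sharpDropTuples Γ c t V W) := by
  intro R hR
  by_contra hsmooth
  simp only [sharpDropTuples, mem_biUnion, mem_univ, mem_filter, true_and, not_exists,
    not_and, not_lt] at hsmooth
  have hlast := pow_mul_card_le_card_prefixNonNeighbors Γ W hc0 hc1 htW hsmooth le_rfl
  rw [prefixNonNeighbors_last] at hlast
  exact (mem_filter.mp hR).2.not_ge hlast

variable {Γ c t V W}

theorem Sparse.card_fiber_sharpDropTuples_le [Fintype Vtx] (hsparse : Sparse Γ c t) (i : Fin r)
    (R : Fin r → V) (hR : R ∈ sharpDropTuples Γ c t V W i) :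
    #{R' ∈ sharpDropTuples Γ c t V W i | ∀ j ≠ i, R' j = R j} ≤ t := by
  set S := prefixNonNeighbors Γ W (Subtype.val ∘ R) i
  set fiber := {R' ∈ sharpDropTuples Γ c t V W i | ∀ j ≠ i, R' j = R j}
  have hsame : ∀ R' ∈ fiber, prefixNonNeighbors Γ W (Subtype.val ∘ R') i = S := fun R' hR' =>
    prefixNonNeighbors_congr Γ W fun j hj => by
      simp [(mem_filter.mp hR').2 j (Fin.ne_of_lt hj)]
  calc #fiber ≤ #(almostDominating Γ c S) := by
        refine card_le_card_of_injOn (fun R' => (R' i).1) (fun R' hR' => ?_) ?_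
        · have hdrop := (mem_filter.mp (mem_filter.mp hR').1).2.2
          rw [prefixNonNeighbors_succ, hsame R' hR'] at hdrop
          simpa [almostDominating] using hdrop
        · intro R₁ hR₁ R₂ hR₂ hval
          funext j
          by_cases hj : j = i
          · exact hj ▸ Subtype.ext hval
          · rw [(mem_filter.mp hR₁).2 j hj, (mem_filter.mp hR₂).2 j hj]
    _ ≤ t := hsparse.card_almostDominating_le (mem_filter.mp hR).2.1

end SharpDrop

theorem stmt_3_general {Vtx : Type*} [Fintype Vtx] (Γ : SimpleGraph Vtx) (c : ℝ) (t r : ℕ)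
    (hc : 0 < c) (hc' : c ≤ 1/2) (hsparse : Sparse Γ c t)
    (V W : Finset Vtx) (hW : (c⁻¹ : ℝ) ^ r * t ≤ W.card) :
    ((Finset.univ.filter fun R : Fin r → {x // x ∈ V} =>
        ((W.filter fun w => ∀ i, ¬ Γ.Adj (R i).1 w).card : ℝ) < c ^ r * W.card).card : ℝ)
      / (V.card : ℝ) ^ r ≤ r * t / V.card := by
  have htW : (t : ℝ) ≤ c ^ r * #W :=
    calc (t : ℝ) = c ^ r * (c⁻¹ ^ r * t) := by
          rw [← mul_assoc, ← mul_pow, mul_inv_cancel₀ hc.ne', one_pow, one_mul]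
      _ ≤ c ^ r * #W := by gcongr
  have hcover := filter_card_lt_subset_biUnion_sharpDropTuples Γ c t V W hc.le (by linarith) htW
  have hstep : ∀ i, (#(sharpDropTuples Γ c t V W i) : ℝ) / (#V : ℝ) ^ r ≤ t / #V := fun i => by
    simpa using card_div_card_pow_le_of_fiber_card_le (sharpDropTuples Γ c t V W i) i t
      (by convert hsparse.card_fiber_sharpDropTuples_le i)
  calc _ ≤ (∑ i, #(sharpDropTuples Γ c t V W i) : ℝ) / (#V : ℝ) ^ r := by
        gcongr
        exact_mod_cast (card_le_card hcover).trans card_biUnion_le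
    _ = ∑ i, (#(sharpDropTuples Γ c t V W i) : ℝ) / (#V : ℝ) ^ r := sum_div ..
    _ ≤ ∑ _i : Fin r, (t : ℝ) / #V := sum_le_sum fun i _ => hstep i
    _ = r * t / #V := by simp [mul_div_assoc]

theorem stmt_3 {Vtx : Type*} [Fintype Vtx] (Γ : SimpleGraph Vtx) (c : ℝ) (t r : ℕ)
    (hc : 0 < c) (hc' : c ≤ 1/2) (hr : 0 < r) (hsparse : Sparse Γ c t)
    (V W : Finset Vtx) (hW : (c⁻¹ : ℝ) ^ r * t ≤ W.card) :
    ((Finset.univ.filter fun R : Fin r → {x // x ∈ V} =>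
        ((W.filter fun w => ∀ i, ¬ Γ.Adj (R i).1 w).card : ℝ) < c ^ r * W.card).card : ℝ)
      / (V.card : ℝ) ^ r ≤ r * t / V.card :=
  stmt_3_general Γ c t r hc hc' hsparse V W hW
end

section
/- Let κ > 1 and let 0 < δ < 1/4 satisfy 1 − 2δ > δ^{1−1/κ}. Let G be a bipartite graph with parts U and R. Then there exists a nonempty subset U' ⊆ U such that: (1) every u ∈ U' has degree in [δ²·d_avg(U'), δ^{−2}·d_avg(U')]; (2) d_avg(U') ≥ δ·d_avg(U); and (3) for every real x ≥ κ, |U'|·d_avg(U')^x ≥ δ^x·|U|·d_avg(U)^x; where d_avg(S) denotes the average degree over S of the vertices of S in G. -/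
open scoped Classical
open Finset

/-- Average degree over `S` of vertices of `S` in the bipartite graph given by the
relation `E : U → R → Prop`. -/
noncomputable def davg {U R : Type*} [Fintype U] [Fintype R] (E : U → R → Prop)
    (S : Finset U) : ℝ :=
  (∑ u ∈ S, ((Finset.univ.filter fun r => E u r).card : ℝ)) / S.card

open scoped BigOperators

/-!
Sort the vertices of large degree (more than `δ d`, `d` the average degree) into buckets
`C_j`, on which `δ ^ j · deg` lies in `(δ d, d]`; every degree in a bucket is within a
factor `δ` of the bucket's average degree `a_j`. If every bucket had
`|C_j| a_j ^ κ < |U| (δ d) ^ κ`, then since `a_j > δ ^ (1 - j) d` its total degree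
`|C_j| a_j` would be at most `|U| δ d q ^ j` with `q = δ ^ (κ - 1) < 1 - 2δ`. Summing the
geometric series, the vertices of large degree would carry less than `|U| d / 2` of the total
degree, and those of small degree at most `δ |U| d < |U| d / 4`, which is absurd. So some
bucket is large, and its size bound for the exponent `κ` propagates to every `x ≥ κ` because
its average is at least `δ d`.
-/

section RealInequalities

variable {δ d : ℝ}

lemma exists_pow_mul_mem_Ioc (hδ₀ : 0 < δ) (hδ₁ : δ < 1) (hd : 0 < d) {w : ℝ} (hw : δ * d < w) :
    ∃ j : ℕ, δ ^ j * w ∈ Set.Ioc (δ * d) d := by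
  have hw₀ : 0 < w := (mul_pos hδ₀ hd).trans hw
  suffices key : ∀ j : ℕ, δ ^ j * w ≤ d → ∃ k : ℕ, δ ^ k * w ∈ Set.Ioc (δ * d) d by
    obtain ⟨j, hj⟩ := exists_pow_lt_of_lt_one (div_pos hd hw₀) hδ₁
    exact key j ((lt_div_iff₀ hw₀).mp hj).le
  intro j
  induction j with
  | zero => exact fun h => ⟨0, by simpa using hw, by simpa using h⟩
  | succ j ih =>
    intro hj
    by_cases hle : δ ^ j * w ≤ d
    · exact ih hle
    · refine ⟨j + 1, ?_, hj⟩
      rw [pow_succ, mul_comm (δ ^ j), mul_assoc]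
      exact mul_lt_mul_of_pos_left (not_le.mp hle) hδ₀

lemma mul_lt_of_mul_mem_Ioc (hδ : 0 ≤ δ) {c x y : ℝ} (hc : 0 < c)
    (hx : c * x ∈ Set.Ioc (δ * d) d) (hy : c * y ∈ Set.Ioc (δ * d) d) : δ * y < x := by
  refine lt_of_mul_lt_mul_left ?_ hc.le
  calc c * (δ * y) = δ * (c * y) := by ring
    _ ≤ δ * d := mul_le_mul_of_nonneg_left hy.2 hδ
    _ < c * x := hx.1

lemma rpow_sub_one_le_rpow_one_sub_inv (hδ₀ : 0 < δ) (hδ₁ : δ ≤ 1) {κ : ℝ} (hκ : 0 < κ) :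
    δ ^ (κ - 1) ≤ δ ^ (1 - 1 / κ) := by
  refine Real.rpow_le_rpow_of_exponent_ge hδ₀ hδ₁ ?_
  have : 0 ≤ (κ - 1) ^ 2 / κ := by positivity
  rw [sub_sq, div_eq_mul_inv] at this
  field_simp at this ⊢
  nlinarith

lemma mul_le_of_mul_rpow_le {κ m n a c e : ℝ} (hκ : 1 ≤ κ) (he : 0 < e) (hc : 0 < c)
    (hm : 0 ≤ m) (ha : e ≤ c * a) (h : m * a ^ κ ≤ n * e ^ κ) : m * a ≤ n * e * c ^ (κ - 1) := by
  have ha₀ : 0 < a := pos_of_mul_pos_right (he.trans_le ha) hc.le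
  have hlow : (e / c) ^ (κ - 1) ≤ a ^ (κ - 1) :=
    Real.rpow_le_rpow (by positivity) ((div_le_iff₀' hc).mpr ha) (by linarith)
  refine le_of_mul_le_mul_right ?_ (by positivity : 0 < (e / c) ^ (κ - 1))
  calc m * a * (e / c) ^ (κ - 1) ≤ m * a * a ^ (κ - 1) := by gcongr
    _ = m * a ^ κ := by rw [mul_assoc, mul_comm a, ← Real.rpow_add_one ha₀.ne', sub_add_cancel]
    _ ≤ n * e ^ κ := h
    _ = n * e * c ^ (κ - 1) * (e / c) ^ (κ - 1) := by
      rw [mul_assoc (n * e), ← Real.mul_rpow hc.le (by positivity), mul_div_cancel₀ e hc.ne',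
        mul_assoc, ← Real.rpow_one_add' he.le (by linarith), add_sub_cancel]

lemma mul_rpow_le_mul_rpow_of_le {κ x m n a e : ℝ} (hκx : κ ≤ x) (he : 0 < e) (hea : e ≤ a)
    (hn : 0 ≤ n) (h : n * e ^ κ ≤ m * a ^ κ) : n * e ^ x ≤ m * a ^ x := by
  have ha : 0 < a := he.trans_le hea
  calc n * e ^ x = n * e ^ κ * e ^ (x - κ) := by
        rw [mul_assoc, ← Real.rpow_add he, add_sub_cancel]
    _ ≤ m * a ^ κ * a ^ (x - κ) := by
      gcongr
      exact le_trans (by positivity) h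
    _ = m * a ^ x := by rw [mul_assoc, ← Real.rpow_add ha, add_sub_cancel]

end RealInequalities

section Buckets

variable {ι : Type*} [Fintype ι] (w : ι → ℝ) (δ d : ℝ)

noncomputable def bucket (j : ℕ) : Finset ι :=
  univ.filter fun i => δ ^ j * w i ∈ Set.Ioc (δ * d) d

variable {w δ d}

lemma mem_bucket {i : ι} {j : ℕ} : i ∈ bucket w δ d j ↔ δ ^ j * w i ∈ Set.Ioc (δ * d) d := by
  simp [bucket]

lemma pow_mul_expect_bucket_mem_Ioc {j : ℕ} (hne : (bucket w δ d j).Nonempty) :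
    δ ^ j * 𝔼 i ∈ bucket w δ d j, w i ∈ Set.Ioc (δ * d) d := by
  obtain ⟨i₀, hi₀⟩ := hne
  rw [mul_expect]
  exact ⟨lt_expect (fun i hi => (mem_bucket.1 hi).1.le) ⟨i₀, hi₀, (mem_bucket.1 hi₀).1⟩,
    expect_le ⟨i₀, hi₀⟩ fun i hi => (mem_bucket.1 hi).2⟩

lemma sq_mul_expect_bucket_le_and_le (hw : 0 ≤ w) (hδ₀ : 0 < δ) {i : ι} {j : ℕ}
    (hi : i ∈ bucket w δ d j) :
    δ ^ 2 * 𝔼 k ∈ bucket w δ d j, w k ≤ w i ∧ w i ≤ δ⁻¹ ^ 2 * 𝔼 k ∈ bucket w δ d j, w k := by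
  set a := 𝔼 k ∈ bucket w δ d j, w k
  have ha := pow_mul_expect_bucket_mem_Ioc ⟨i, hi⟩
  have hwi := mem_bucket.1 hi
  have ha₀ : 0 ≤ a := expect_nonneg fun k _ => hw k
  have hlt₁ : δ * a < w i := mul_lt_of_mul_mem_Ioc hδ₀.le (pow_pos hδ₀ j) hwi ha
  have hlt₂ : δ * w i < a := mul_lt_of_mul_mem_Ioc hδ₀.le (pow_pos hδ₀ j) ha hwi
  refine ⟨by nlinarith, ?_⟩
  rw [inv_pow, le_inv_mul_iff₀ (by positivity)]
  nlinarith [hw i]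

lemma sum_filter_lt_le_of_forall_sum_bucket_le (hw : 0 ≤ w) (hδ₀ : 0 < δ) (hδ₁ : δ < 1)
    (hd : 0 < d) {B q : ℝ} (hB : 0 ≤ B) (hq₀ : 0 ≤ q) (hq₁ : q < 1)
    (h : ∀ j, ∑ i ∈ bucket w δ d j, w i ≤ B * q ^ j) :
    ∑ i with δ * d < w i, w i ≤ B / (1 - q) := by
  set H := univ.filter fun i => δ * d < w i
  have hcover : ∀ i, ∃ j, δ * d < w i → i ∈ bucket w δ d j := by
    intro i
    by_cases hi : δ * d < w i
    · obtain ⟨j, hj⟩ := exists_pow_mul_mem_Ioc hδ₀ hδ₁ hd hi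
      exact ⟨j, fun _ => mem_bucket.2 hj⟩
    · exact ⟨0, fun h => absurd h hi⟩
  choose jf hjf using hcover
  calc ∑ i ∈ H, w i = ∑ j ∈ H.image jf, ∑ i ∈ H with jf i = j, w i :=
        (sum_fiberwise_of_maps_to (fun i hi => mem_image_of_mem jf hi) w).symm
    _ ≤ ∑ j ∈ H.image jf, ∑ i ∈ bucket w δ d j, w i := by
        refine sum_le_sum fun j _ => sum_le_sum_of_subset_of_nonneg ?_ fun i _ _ => hw i
        intro i hi
        obtain ⟨hiH, rfl⟩ := mem_filter.1 hi
        exact hjf i (mem_filter.1 hiH).2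
    _ ≤ ∑ j ∈ H.image jf, B * q ^ j := sum_le_sum fun j _ => h j
    _ ≤ B * ∑' j : ℕ, q ^ j := by
        rw [← mul_sum]
        exact mul_le_mul_of_nonneg_left
          ((summable_geometric_of_lt_one hq₀ hq₁).sum_le_tsum _ fun j _ => by positivity) hB
    _ = B / (1 - q) := by rw [tsum_geometric_of_lt_one hq₀ hq₁, div_eq_mul_inv]

lemma exists_bucket_card_mul_rpow_ge [Nonempty ι] (hw : 0 ≤ w) (hd : 0 < 𝔼 i, w i)
    (hδ₀ : 0 < δ) (hδ₁ : δ < 1 / 4) {κ : ℝ} (hκ : 1 ≤ κ) (hq : δ ^ (κ - 1) < 1 - 2 * δ) :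
    ∃ j, (bucket w δ (𝔼 i, w i) j).Nonempty ∧
      Fintype.card ι * (δ * 𝔼 i, w i) ^ κ ≤
        #(bucket w δ (𝔼 i, w i) j) * (𝔼 i ∈ bucket w δ (𝔼 i, w i) j, w i) ^ κ := by
  set d := 𝔼 i, w i
  set n : ℝ := (Fintype.card ι : ℝ)
  set q := δ ^ (κ - 1)
  have hn : 0 < n := Nat.cast_pos.2 Fintype.card_pos
  have hq₀ : 0 ≤ q := by positivity
  by_contra! hsmall
  have hbucket : ∀ j, ∑ i ∈ bucket w δ d j, w i ≤ n * (δ * d) * q ^ j := by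
    intro j
    rcases (bucket w δ d j).eq_empty_or_nonempty with hempty | hne
    · rw [hempty, sum_empty]
      positivity
    · rw [← card_mul_expect, Real.rpow_pow_comm hδ₀.le]
      exact mul_le_of_mul_rpow_le hκ (by positivity) (by positivity) (by positivity)
        (pow_mul_expect_bucket_mem_Ioc hne).1.le (hsmall j hne).le
  have hheavy : ∑ i with δ * d < w i, w i ≤ n * (δ * d) / (1 - q) :=
    sum_filter_lt_le_of_forall_sum_bucket_le hw hδ₀ (by linarith) hd (by positivity) hq₀
      (by linarith) hbucket
  have hlight : ∑ i with ¬δ * d < w i, w i ≤ n * (δ * d) := by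
    refine (sum_le_card_nsmul _ _ _ fun i hi => not_lt.1 (mem_filter.1 hi).2).trans ?_
    rw [nsmul_eq_mul]
    gcongr
    exact Nat.cast_le.2 (card_le_univ _)
  have htotal : n * d = ∑ i with δ * d < w i, w i + ∑ i with ¬δ * d < w i, w i := by
    rw [sum_filter_add_sum_filter_not, Fintype.card_mul_expect]
  have hhalf : δ / (1 - q) < 1 / 2 := by
    rw [div_lt_iff₀ (by linarith)]
    linarith
  have hnd : 0 < n * d := by positivity
  have hheavy_lt : n * (δ * d) / (1 - q) < n * d / 2 :=
    calc n * (δ * d) / (1 - q) = n * d * (δ / (1 - q)) := by ring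
      _ < n * d * (1 / 2) := mul_lt_mul_of_pos_left hhalf hnd
      _ = n * d / 2 := by ring
  nlinarith [mul_lt_mul_of_pos_left hδ₁ hnd]

end Buckets

theorem exists_reduced_finset {ι : Type*} [Fintype ι] [Nonempty ι] (w : ι → ℝ) (hw : 0 ≤ w)
    {κ δ : ℝ} (hκ : 1 < κ) (hδ₀ : 0 < δ) (hδ₁ : δ < 1 / 4) (hδκ : δ ^ (1 - 1 / κ) < 1 - 2 * δ) :
    ∃ t : Finset ι, t.Nonempty ∧
      (∀ i ∈ t, δ ^ 2 * 𝔼 k ∈ t, w k ≤ w i ∧ w i ≤ δ⁻¹ ^ 2 * 𝔼 k ∈ t, w k) ∧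
      δ * 𝔼 i, w i ≤ 𝔼 i ∈ t, w i ∧
      ∀ x : ℝ, κ ≤ x →
        δ ^ x * Fintype.card ι * (𝔼 i, w i) ^ x ≤ #t * (𝔼 i ∈ t, w i) ^ x := by
  rcases (expect_nonneg fun i _ => hw i : 0 ≤ 𝔼 i, w i).eq_or_lt with hd | hd
  · have hw₀ : w = 0 := (Fintype.expect_eq_zero_iff_of_nonneg hw).1 hd.symm
    refine ⟨univ, univ_nonempty, by simp [hw₀], by simp [hw₀], fun x hx => ?_⟩
    simp [hw₀, Real.zero_rpow (by linarith : x ≠ 0)]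
  have hq : δ ^ (κ - 1) < 1 - 2 * δ :=
    (rpow_sub_one_le_rpow_one_sub_inv hδ₀ (by linarith) (by linarith)).trans_lt hδκ
  obtain ⟨j, hne, hlarge⟩ := exists_bucket_card_mul_rpow_ge hw hd hδ₀ hδ₁ hκ.le hq
  have hδd : δ * 𝔼 i, w i ≤ 𝔼 i ∈ bucket w δ (𝔼 i, w i) j, w i :=
    (pow_mul_expect_bucket_mem_Ioc hne).1.le.trans <| mul_le_of_le_one_left
      (expect_nonneg fun i _ => hw i) (pow_le_one₀ hδ₀.le (by linarith))
  refine ⟨_, hne, fun i hi => sq_mul_expect_bucket_le_and_le hw hδ₀ hi, hδd, fun x hx => ?_⟩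
  rw [mul_comm (δ ^ x), mul_assoc, ← Real.mul_rpow hδ₀.le hd.le]
  exact mul_rpow_le_mul_rpow_of_le hx (by positivity) hδd (by positivity) hlarge

lemma davg_eq_expect {U R : Type*} [Fintype U] [Fintype R] (E : U → R → Prop) (S : Finset U) :
    davg E S = 𝔼 u ∈ S, ((univ.filter fun r => E u r).card : ℝ) :=
  (expect_eq_sum_div_card S _).symm

theorem stmt_5 {U R : Type*} [Fintype U] [Fintype R] [Nonempty U]
    (E : U → R → Prop) (κ δ : ℝ) (hκ : 1 < κ) (hδ₀ : 0 < δ) (hδ₁ : δ < 1/4)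
    (hδκ : δ ^ (1 - 1/κ) < 1 - 2*δ) :
    ∃ U' : Finset U, U'.Nonempty ∧
      (∀ u ∈ U', δ^2 * davg E U' ≤ ((Finset.univ.filter fun r => E u r).card : ℝ) ∧
        ((Finset.univ.filter fun r => E u r).card : ℝ) ≤ δ⁻¹^2 * davg E U') ∧
      δ * davg E Finset.univ ≤ davg E U' ∧
      (∀ x : ℝ, κ ≤ x →
        δ ^ x * (Fintype.card U : ℝ) * (davg E Finset.univ) ^ x ≤
          (U'.card : ℝ) * (davg E U') ^ x) := by
  simp only [davg_eq_expect]
  exact exists_reduced_finset _ (fun u => Nat.cast_nonneg _) hκ hδ₀ hδ₁ hδκ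
end

section
/- Let Γ be a (c,t)-sparse graph and let π₁, π₂ be probability measures on V(Γ) with π_i(v) < γ/t for all vertices v and i ∈ {1,2}, where 0 < γ < 1. Define D(π₂) = { x ∈ V(Γ) : π₂({ y : {x,y} ∉ E(Γ) }) ≥ c }. Then Pr_{x∼π₁}[x ∈ D(π₂)] > 1 − γ. -/
open scoped Classical
open Finset SimpleGraph

/-- LP lower bound: if `w` is a measure with cap `C` and total mass at least `t*C`,
and every set of at least `t` vertices has average `h`-value at least `θ`, then the
`w`-average of `h` is at least `θ`. -/
lemma lp_bound {V : Type*} [Fintype V] (w h : V → ℝ) (C θ : ℝ) (t : ℕ)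
    (ht : 0 < t) (hC : 0 < C) (hθ : 0 ≤ θ)
    (hw0 : ∀ y, 0 ≤ w y) (hwC : ∀ y, w y ≤ C)
    (hW : (t : ℝ) * C ≤ ∑ y, w y)
    (hh0 : ∀ y, 0 ≤ h y)
    (hcon : ∀ A : Finset V, t ≤ A.card → θ * A.card ≤ ∑ y ∈ A, h y) :
    θ * ∑ y, w y ≤ ∑ y, w y * h y := by
  set W := ∑ y, w y with hWdef
  have htR : (0:ℝ) < t := by exact_mod_cast ht
  have hWpos : 0 < W := lt_of_lt_of_le (by positivity) hW
  have huniv : (Finset.univ : Finset V).Nonempty := by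
    by_contra hemp
    rw [Finset.not_nonempty_iff_eq_empty] at hemp
    rw [hWdef, hemp, Finset.sum_empty] at hWpos
    exact lt_irrefl _ hWpos
  obtain ⟨ymax, -, hymax⟩ := Finset.exists_max_image Finset.univ h huniv
  set Y₀ : Finset V := Finset.univ.filter
    (fun y => W ≤ C * ((Finset.univ.filter fun z => h z ≤ h y).card)) with hY₀def
  have hymaxY₀ : ymax ∈ Y₀ := by
    refine Finset.mem_filter.2 ⟨Finset.mem_univ _, ?_⟩
    have hfil : (Finset.univ.filter fun z => h z ≤ h ymax) = Finset.univ :=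
      Finset.filter_true_of_mem fun z _ => hymax z (Finset.mem_univ z)
    rw [hfil]
    calc W ≤ ∑ _y : V, C := Finset.sum_le_sum fun y _ => hwC y
      _ = C * (Finset.univ.card : ℝ) := by
          rw [Finset.sum_const, nsmul_eq_mul, mul_comm]
      _ = C * ((Finset.univ : Finset V).card : ℝ) := rfl
  obtain ⟨y₀, hy₀mem, hy₀min⟩ := Finset.exists_min_image Y₀ h ⟨ymax, hymaxY₀⟩
  set lam := h y₀ with hlamdef
  set L : Finset V := Finset.univ.filter (fun z => h z ≤ lam) with hLdef
  set S : Finset V := Finset.univ.filter (fun z => h z < lam) with hSdef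
  have hL : W ≤ C * L.card := (Finset.mem_filter.1 hy₀mem).2
  have hSlt : ∀ y ∈ S, C * ((Finset.univ.filter fun z => h z ≤ h y).card) < W := by
    intro y hy
    have hyl : h y < lam := (Finset.mem_filter.1 hy).2
    by_contra hcon'
    push_neg at hcon'
    have hyY₀ : y ∈ Y₀ := Finset.mem_filter.2 ⟨Finset.mem_univ y, hcon'⟩
    exact absurd (hy₀min y hyY₀) (not_le.2 hyl)
  have htL : t ≤ L.card := by
    have h1 : (t : ℝ) * C ≤ C * L.card := hW.trans hL
    have h2 : (t : ℝ) ≤ (L.card : ℝ) := by nlinarith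
    exact_mod_cast h2
  have hLpos : (0:ℝ) < L.card := by
    have : (t:ℝ) ≤ (L.card : ℝ) := by exact_mod_cast htL
    linarith
  have hθlam : θ ≤ lam := by
    have h1 := hcon L htL
    have h2 : ∑ y ∈ L, h y ≤ lam * L.card := by
      calc ∑ y ∈ L, h y ≤ ∑ _y ∈ L, lam :=
            Finset.sum_le_sum fun y hy => (Finset.mem_filter.1 hy).2
        _ = lam * L.card := by rw [Finset.sum_const, nsmul_eq_mul, mul_comm]
    nlinarith
  have hSL : S ⊆ L := fun z hz =>
    Finset.mem_filter.2 ⟨Finset.mem_univ z, le_of_lt (Finset.mem_filter.1 hz).2⟩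
  obtain ⟨S', hSS', hS'L, hS't, hS'W⟩ :
      ∃ S' : Finset V, S ⊆ S' ∧ S' ⊆ L ∧ t ≤ S'.card ∧ C * S'.card ≤ W := by
    by_cases hSc : t ≤ S.card
    · refine ⟨S, Finset.Subset.refl S, hSL, hSc, ?_⟩
      have hSne : S.Nonempty := Finset.card_pos.1 (lt_of_lt_of_le ht hSc)
      obtain ⟨ys, hysS, hys⟩ := Finset.exists_max_image S h hSne
      have hsub : S ⊆ Finset.univ.filter fun z => h z ≤ h ys := fun z hz =>
        Finset.mem_filter.2 ⟨Finset.mem_univ z, hys z hz⟩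
      have hcard : (S.card : ℝ) ≤ ((Finset.univ.filter fun z => h z ≤ h ys).card : ℝ) := by
        exact_mod_cast Finset.card_le_card hsub
      have := hSlt ys hysS
      nlinarith
    · push_neg at hSc
      obtain ⟨S', hSS', hS'L, hS'card⟩ :=
        Finset.exists_subsuperset_card_eq hSL hSc.le htL
      refine ⟨S', hSS', hS'L, le_of_eq hS'card.symm, ?_⟩
      rw [hS'card]
      calc C * (t:ℝ) = (t:ℝ) * C := mul_comm _ _
        _ ≤ W := hW
  -- the deficit sum
  set Δ := ∑ y ∈ S, (lam - h y) with hΔdef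
  have hΔ1 : Δ ≤ ∑ y ∈ S', (lam - h y) := by
    refine Finset.sum_le_sum_of_subset_of_nonneg hSS' fun y hy _ => ?_
    exact sub_nonneg.2 (Finset.mem_filter.1 (hS'L hy)).2
  have hΔ2 : ∑ y ∈ S', (lam - h y) ≤ (lam - θ) * S'.card := by
    have h1 := hcon S' hS't
    rw [Finset.sum_sub_distrib, Finset.sum_const, nsmul_eq_mul]
    nlinarith
  -- pointwise dual inequality
  have hpt : ∀ y, lam * w y - C * (if y ∈ S then lam - h y else 0) ≤ w y * h y := by
    intro y
    by_cases hy : y ∈ S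
    · simp only [hy, if_true]
      have h1 : h y < lam := (Finset.mem_filter.1 hy).2
      nlinarith [hw0 y, hwC y]
    · simp only [hy, if_false]
      have h1 : lam ≤ h y := by
        by_contra hlt
        push_neg at hlt
        exact hy (Finset.mem_filter.2 ⟨Finset.mem_univ y, hlt⟩)
      nlinarith [hw0 y]
  have hsum : lam * W - C * Δ ≤ ∑ y, w y * h y := by
    have h1 := Finset.sum_le_sum fun y (_ : y ∈ Finset.univ) => hpt y
    have h2 : ∑ y, (lam * w y - C * (if y ∈ S then lam - h y else 0))
        = lam * W - C * Δ := by
      rw [Finset.sum_sub_distrib, ← Finset.mul_sum, ← Finset.mul_sum]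
      congr 2
      rw [Finset.sum_ite_mem, Finset.univ_inter]
    rw [h2] at h1
    exact h1
  have e1 : C * Δ ≤ (lam - θ) * W := by
    calc C * Δ ≤ C * ((lam - θ) * S'.card) :=
          mul_le_mul_of_nonneg_left (hΔ1.trans hΔ2) hC.le
      _ = (lam - θ) * (C * S'.card) := by ring
      _ ≤ (lam - θ) * W := mul_le_mul_of_nonneg_left hS'W (by linarith)
  linarith

theorem stmt_6 {V : Type*} [Fintype V] (Γ : SimpleGraph V) (c γ : ℝ) (t : ℕ)
    (hc : 0 < c) (ht : 0 < t) (hγ₀ : 0 < γ) (hγ₁ : γ < 1)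
    (hsparse : Sparse Γ c t)
    (π₁ π₂ : V → ℝ) (h₁pos : ∀ v, 0 ≤ π₁ v) (h₂pos : ∀ v, 0 ≤ π₂ v)
    (h₁sum : ∑ v, π₁ v = 1) (h₂sum : ∑ v, π₂ v = 1)
    (h₁bd : ∀ v, π₁ v < γ / t) (h₂bd : ∀ v, π₂ v < γ / t) :
    1 - γ < ∑ x ∈ Finset.univ.filter
        (fun x => c ≤ ∑ y ∈ Finset.univ.filter (fun y => ¬ Γ.Adj x y), π₂ y), π₁ x := by
  have htR : (0:ℝ) < t := by exact_mod_cast ht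
  have htne : (t:ℝ) ≠ 0 := ne_of_gt htR
  set P : V → Prop := fun x => c ≤ ∑ y ∈ Finset.univ.filter (fun y => ¬ Γ.Adj x y), π₂ y
    with hPdef
  -- Step 1: the complement of D has fewer than t elements
  have hcard : ¬ t ≤ (Finset.univ.filter fun x => ¬ P x).card := by
    intro htc
    obtain ⟨B, hBsub, hBcard⟩ := Finset.exists_subset_card_eq htc
    have hBne : B.Nonempty := Finset.card_pos.1 (by rw [hBcard]; exact ht)
    have hBbad : ∀ x ∈ B, ∑ y ∈ Finset.univ.filter (fun y => ¬ Γ.Adj x y), π₂ y < c := by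
      intro x hx
      have hxm := (Finset.mem_filter.1 (hBsub hx)).2
      exact not_le.1 hxm
    set h : V → ℝ := fun y => ((B.filter fun x => ¬ Γ.Adj x y).card : ℝ) with hhdef
    -- double counting
    have hdc : ∑ y, π₂ y * h y
        = ∑ x ∈ B, ∑ y ∈ Finset.univ.filter (fun y => ¬ Γ.Adj x y), π₂ y := by
      calc ∑ y, π₂ y * h y
          = ∑ y : V, ∑ x ∈ B, (if ¬ Γ.Adj x y then π₂ y else 0) := by
            refine Finset.sum_congr rfl fun y _ => ?_
            rw [← Finset.sum_filter, Finset.sum_const, nsmul_eq_mul, hhdef, mul_comm]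
        _ = ∑ x ∈ B, ∑ y : V, (if ¬ Γ.Adj x y then π₂ y else 0) := Finset.sum_comm
        _ = ∑ x ∈ B, ∑ y ∈ Finset.univ.filter (fun y => ¬ Γ.Adj x y), π₂ y := by
            refine Finset.sum_congr rfl fun x _ => (Finset.sum_filter _ _).symm
    have hlt : ∑ y, π₂ y * h y < c * t := by
      rw [hdc]
      calc ∑ x ∈ B, ∑ y ∈ Finset.univ.filter (fun y => ¬ Γ.Adj x y), π₂ y
          < ∑ _x ∈ B, c := Finset.sum_lt_sum_of_nonempty hBne hBbad
        _ = c * t := by rw [Finset.sum_const, nsmul_eq_mul, hBcard, mul_comm]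
    -- sparseness gives the set constraints
    have hcon : ∀ A : Finset V, t ≤ A.card → (c * t) * A.card ≤ ∑ y ∈ A, h y := by
      intro A hA
      have hsp := hsparse B A (le_of_eq hBcard.symm) hA
      have hid : ((B ×ˢ A).filter fun p => Γ.Adj p.1 p.2).card
          + ((B ×ˢ A).filter fun p => ¬ Γ.Adj p.1 p.2).card = B.card * A.card := by
        rw [Finset.card_filter_add_card_filter_not, Finset.card_product]
      have hid2 : ((B ×ˢ A).filter fun p => ¬ Γ.Adj p.1 p.2).card
          = ∑ y ∈ A, (B.filter fun x => ¬ Γ.Adj x y).card := by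
        rw [Finset.card_filter, Finset.sum_product, Finset.sum_comm]
        refine Finset.sum_congr rfl fun y _ => (Finset.card_filter _ _).symm
      have hsumh : ∑ y ∈ A, h y
          = (((B ×ˢ A).filter fun p => ¬ Γ.Adj p.1 p.2).card : ℝ) := by
        rw [hid2]
        push_cast
        rfl
      have hidR : (((B ×ˢ A).filter fun p => Γ.Adj p.1 p.2).card : ℝ)
          + (((B ×ˢ A).filter fun p => ¬ Γ.Adj p.1 p.2).card : ℝ)
          = (t : ℝ) * A.card := by
        rw [← Nat.cast_add, hid, hBcard]
        push_cast
        ring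
      rw [hsumh]
      rw [hBcard] at hsp
      nlinarith [hsp, hidR]
    -- apply the LP bound with w = π₂, C = γ/t, θ = c*t
    have hCpos : (0:ℝ) < γ / t := div_pos hγ₀ htR
    have hWbd : (t : ℝ) * (γ / t) ≤ ∑ y, π₂ y := by
      rw [h₂sum, mul_div_cancel₀ γ htne]
      linarith
    have hlp := lp_bound π₂ h (γ / t) (c * t) t ht hCpos
      (by positivity) h₂pos (fun y => (h₂bd y).le) hWbd
      (fun y => by simp [hhdef]) hcon
    rw [h₂sum, mul_one] at hlp
    exact absurd hlt (not_lt.2 hlp)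
  -- Step 2: conclude
  push_neg at hcard
  have hcard' : (Finset.univ.filter fun x => ¬ P x).card ≤ t - 1 := Nat.le_pred_of_lt hcard
  have hsumDc : ∑ x ∈ Finset.univ.filter (fun x => ¬ P x), π₁ x < γ := by
    have h1 : ∑ x ∈ Finset.univ.filter (fun x => ¬ P x), π₁ x
        ≤ ((Finset.univ.filter fun x => ¬ P x).card : ℝ) * (γ / t) := by
      calc ∑ x ∈ Finset.univ.filter (fun x => ¬ P x), π₁ x
          ≤ ∑ _x ∈ Finset.univ.filter (fun x => ¬ P x), (γ / t) :=
            Finset.sum_le_sum fun x _ => (h₁bd x).le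
        _ = ((Finset.univ.filter fun x => ¬ P x).card : ℝ) * (γ / t) := by
            rw [Finset.sum_const, nsmul_eq_mul]
    have h2 : ((Finset.univ.filter fun x => ¬ P x).card : ℝ) ≤ (t : ℝ) - 1 := by
      have := hcard'
      have h3 : ((Finset.univ.filter fun x => ¬ P x).card : ℝ) ≤ ((t - 1 : ℕ) : ℝ) := by
        exact_mod_cast this
      rwa [Nat.cast_sub ht, Nat.cast_one] at h3
    have h4 : ((t:ℝ) - 1) * (γ / t) < γ := by
      have h5 : (t:ℝ) * (γ / t) = γ := mul_div_cancel₀ γ htne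
      have h6 : 0 < γ / t := div_pos hγ₀ htR
      nlinarith
    have h7 : (0:ℝ) ≤ γ / t := le_of_lt (div_pos hγ₀ htR)
    nlinarith
  have hsplit := Finset.sum_filter_add_sum_filter_not Finset.univ P π₁
  rw [h₁sum] at hsplit
  linarith
end

section
/- Let Γ be a (c,t)-sparse graph, let π₁, π₂ be probability measures on V(Γ) with π_i(v) < γ/t for all v and i ∈ {1,2}, where 0 < γ < 1, and let S_y ⊆ V(Γ) with |S_y| ≥ t for each y in the support of π₂. Define D = { x ∈ V(Γ) : π₂({ y : |S_y \ N_Γ(x)| < c|S_y| }) < √γ }. Then Pr_{x∼π₁}[x ∈ D] > 1 − √γ. -/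
open scoped Classical
open Finset SimpleGraph

theorem stmt_7 {V : Type*} [Fintype V] (Γ : SimpleGraph V) (c γ : ℝ) (t : ℕ)
    (hc : 0 < c) (ht : 0 < t) (hγ₀ : 0 < γ) (hγ₁ : γ < 1)
    (hsparse : Sparse Γ c t)
    (π₁ π₂ : V → ℝ) (h₁pos : ∀ v, 0 ≤ π₁ v) (h₂pos : ∀ v, 0 ≤ π₂ v)
    (h₁sum : ∑ v, π₁ v = 1) (h₂sum : ∑ v, π₂ v = 1)
    (h₁bd : ∀ v, π₁ v < γ / t) (h₂bd : ∀ v, π₂ v < γ / t)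
    (S : V → Finset V) (hS : ∀ y, π₂ y ≠ 0 → t ≤ (S y).card) :
    1 - Real.sqrt γ < ∑ x ∈ Finset.univ.filter (fun x =>
        (∑ y ∈ Finset.univ.filter (fun y =>
            (((S y).filter fun z => ¬ Γ.Adj x z).card : ℝ) < c * (S y).card), π₂ y)
          < Real.sqrt γ), π₁ x := by
  set sγ := Real.sqrt γ with hsγ
  have hsγpos : 0 < sγ := Real.sqrt_pos.mpr hγ₀
  have htR : (0:ℝ) < t := by exact_mod_cast ht
  have hγt : 0 < γ / t := div_pos hγ₀ htR
  -- `bad x y` predicate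
  set bad : V → V → Prop :=
    fun x y => (((S y).filter fun z => ¬ Γ.Adj x z).card : ℝ) < c * (S y).card with hbaddef
  -- g x = π₂-mass of bad y's for x
  set g : V → ℝ := fun x => ∑ y ∈ Finset.univ.filter (bad x), π₂ y with hgdef
  have hgnn : ∀ x, 0 ≤ g x := fun x => Finset.sum_nonneg fun y _ => h₂pos y
  -- Step 1: for each y with π₂ y ≠ 0, the π₁-mass of bad x's is < γ
  have key : ∀ y, π₂ y ≠ 0 →
      ∑ x ∈ Finset.univ.filter (fun x => bad x y), π₁ x < γ := by
    intro y hy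
    set A := Finset.univ.filter (fun x => bad x y) with hA
    have hcard : A.card < t := by
      by_contra hcon
      push_neg at hcon
      have hsp := hsparse A (S y) hcon (hS y hy)
      have hcount : (((A ×ˢ (S y)).filter fun p => Γ.Adj p.1 p.2).card : ℝ)
          = ∑ x ∈ A, (((S y).filter fun z => Γ.Adj x z).card : ℝ) := by
        have hnat : ((A ×ˢ (S y)).filter fun p => Γ.Adj p.1 p.2).card
            = ∑ x ∈ A, ((S y).filter fun z => Γ.Adj x z).card := by
          rw [Finset.card_filter, Finset.sum_product]
          exact Finset.sum_congr rfl fun x _ => (Finset.card_filter _ _).symm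
        rw [hnat]
        push_cast
        rfl
      have hlb : ∀ x ∈ A, (1 - c) * ((S y).card : ℝ)
          < (((S y).filter fun z => Γ.Adj x z).card : ℝ) := by
        intro x hx
        have hx' : (((S y).filter fun z => ¬ Γ.Adj x z).card : ℝ) < c * (S y).card :=
          (Finset.mem_filter.mp hx).2
        have hsplit : ((S y).filter fun z => Γ.Adj x z).card
            + ((S y).filter fun z => ¬ Γ.Adj x z).card = (S y).card :=
          Finset.card_filter_add_card_filter_not _
        have hsplitR : (((S y).filter fun z => Γ.Adj x z).card : ℝ)
            + (((S y).filter fun z => ¬ Γ.Adj x z).card : ℝ) = ((S y).card : ℝ) := by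
          exact_mod_cast hsplit
        nlinarith
      have hAne : A.Nonempty := Finset.card_pos.mp (lt_of_lt_of_le ht hcon)
      have hsum := Finset.sum_lt_sum_of_nonempty hAne hlb
      rw [Finset.sum_const, nsmul_eq_mul] at hsum
      rw [hcount] at hsp
      nlinarith
    have hle : ∑ x ∈ A, π₁ x ≤ (A.card : ℝ) * (γ / t) := by
      calc ∑ x ∈ A, π₁ x ≤ ∑ _x ∈ A, (γ / t) :=
            Finset.sum_le_sum fun x _ => (h₁bd x).le
        _ = (A.card : ℝ) * (γ / t) := by rw [Finset.sum_const, nsmul_eq_mul]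
    have hlt : (A.card : ℝ) * (γ / t) < (t : ℝ) * (γ / t) := by
      apply mul_lt_mul_of_pos_right _ hγt
      exact_mod_cast hcard
    have heq : (t : ℝ) * (γ / t) = γ := by field_simp
    linarith
  -- Step 2: double sum bound
  have double : ∑ x, π₁ x * g x < γ := by
    have eq1 : ∑ x, π₁ x * g x
        = ∑ y, π₂ y * ∑ x ∈ Finset.univ.filter (fun x => bad x y), π₁ x := by
      calc ∑ x, π₁ x * g x
          = ∑ x, ∑ y, (if bad x y then π₁ x * π₂ y else 0) := by
            refine Finset.sum_congr rfl fun x _ => ?_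
            simp only [hgdef]
            rw [Finset.sum_filter, Finset.mul_sum]
            exact Finset.sum_congr rfl fun y _ => by split <;> simp
        _ = ∑ y, ∑ x, (if bad x y then π₁ x * π₂ y else 0) := Finset.sum_comm
        _ = ∑ y, π₂ y * ∑ x ∈ Finset.univ.filter (fun x => bad x y), π₁ x := by
            refine Finset.sum_congr rfl fun y _ => ?_
            rw [Finset.mul_sum, Finset.sum_filter]
            exact Finset.sum_congr rfl fun x _ => by split <;> [ring; simp]
    rw [eq1]
    have hex : ∃ y₀ : V, π₂ y₀ ≠ 0 := by
      by_contra hno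
      push_neg at hno
      simp [hno] at h₂sum
    obtain ⟨y₀, hy₀⟩ := hex
    have hy₀pos : 0 < π₂ y₀ := lt_of_le_of_ne (h₂pos y₀) (Ne.symm hy₀)
    have hstep : ∑ y, π₂ y * ∑ x ∈ Finset.univ.filter (fun x => bad x y), π₁ x
        < ∑ y, π₂ y * γ := by
      apply Finset.sum_lt_sum
      · intro y _
        by_cases hy : π₂ y = 0
        · simp [hy]
        · exact mul_le_mul_of_nonneg_left (key y hy).le (h₂pos y)
      · exact ⟨y₀, Finset.mem_univ y₀,
          mul_lt_mul_of_pos_left (key y₀ hy₀) hy₀pos⟩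
    calc ∑ y, π₂ y * ∑ x ∈ Finset.univ.filter (fun x => bad x y), π₁ x
        < ∑ y, π₂ y * γ := hstep
      _ = γ := by rw [← Finset.sum_mul, h₂sum, one_mul]
  -- Step 3: Markov
  have hsplitD : ∑ x ∈ Finset.univ.filter (fun x => g x < sγ), π₁ x
      + ∑ x ∈ Finset.univ.filter (fun x => ¬ g x < sγ), π₁ x = 1 := by
    rw [Finset.sum_filter_add_sum_filter_not]; exact h₁sum
  have hDc : ∑ x ∈ Finset.univ.filter (fun x => ¬ g x < sγ), π₁ x < sγ := by
    have h1 : sγ * ∑ x ∈ Finset.univ.filter (fun x => ¬ g x < sγ), π₁ x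
        ≤ ∑ x ∈ Finset.univ.filter (fun x => ¬ g x < sγ), π₁ x * g x := by
      rw [Finset.mul_sum]
      refine Finset.sum_le_sum fun x hx => ?_
      have hx' : ¬ g x < sγ := (Finset.mem_filter.mp hx).2
      push_neg at hx'
      calc sγ * π₁ x ≤ g x * π₁ x := mul_le_mul_of_nonneg_right hx' (h₁pos x)
        _ = π₁ x * g x := mul_comm _ _
    have h2 : ∑ x ∈ Finset.univ.filter (fun x => ¬ g x < sγ), π₁ x * g x
        ≤ ∑ x, π₁ x * g x :=
      Finset.sum_le_sum_of_subset_of_nonneg (Finset.filter_subset _ _)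
        (fun x _ _ => mul_nonneg (h₁pos x) (hgnn x))
    have hγeq : sγ * sγ = γ := Real.mul_self_sqrt hγ₀.le
    have h3 : sγ * ∑ x ∈ Finset.univ.filter (fun x => ¬ g x < sγ), π₁ x < sγ * sγ := by
      linarith
    exact lt_of_mul_lt_mul_left h3 hsγpos.le
  linarith
end

section
/- For every finite labelled tree T there exists a T-peeling mapping, i.e., a function ν from the set of subtrees of T to subsets of V(T) such that ν({v}) = {v} for every vertex v, and for every subtree T' with at least 2 vertices, ν(T') = {u, w} for two (distinct, when |T'| ≥ 2) leaves u, w of T' satisfying u ∈ ν(T' − w) and w ∈ ν(T' − u). -/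
open scoped Classical
open Finset SimpleGraph

section m1
variable {α : Type*} [Inhabited α] {f : α → ℕ}

noncomputable def m1 (f : α → ℕ) (A : Finset α) : α :=
  if h : A.Nonempty then (A.exists_max_image f h).choose else default

theorem m1_mem {A : Finset α} (hA : A.Nonempty) : m1 f A ∈ A := by
  rw [m1, dif_pos hA]
  exact (A.exists_max_image f hA).choose_spec.1

theorem le_m1 {A : Finset α} {x : α} (hx : x ∈ A) : f x ≤ f (m1 f A) := by
  rw [m1, dif_pos ⟨x, hx⟩]
  exact (A.exists_max_image f ⟨x, hx⟩).choose_spec.2 x hx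

theorem m1_eq_of (hinj : Function.Injective f) {A : Finset α} {a : α} (ha : a ∈ A)
    (hmax : ∀ x ∈ A, f x ≤ f a) : m1 f A = a :=
  hinj (le_antisymm (hmax _ (m1_mem ⟨a, ha⟩)) (le_m1 ha))

/-- If `A ⊆ B` and `B` has at most one element outside `A`, then the max of `A`
is the max or second max of `B`. -/
theorem m1_top2 [DecidableEq α] (hinj : Function.Injective f) {A B : Finset α}
    (hA : A.Nonempty) (hAB : A ⊆ B)
    (h1 : (B \ A).card ≤ 1) : m1 f A = m1 f B ∨ m1 f A = m1 f (B.erase (m1 f B)) := by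
  by_cases h : m1 f A = m1 f B
  · exact Or.inl h
  · right
    have hBne : B.Nonempty := hA.mono hAB
    have hmBA : m1 f B ∉ A := by
      intro hmem
      exact h (hinj (le_antisymm (le_m1 (hAB (m1_mem hA))) (le_m1 hmem)))
    have hEq : B.erase (m1 f B) = A := by
      apply Finset.Subset.antisymm
      · intro x hx
        rw [Finset.mem_erase] at hx
        by_contra hxA
        have hx1 : x ∈ B \ A := Finset.mem_sdiff.mpr ⟨hx.2, hxA⟩
        have hx2 : m1 f B ∈ B \ A := Finset.mem_sdiff.mpr ⟨m1_mem hBne, hmBA⟩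
        have hsub : ({x, m1 f B} : Finset α) ⊆ B \ A := by
          intro y hy
          rcases Finset.mem_insert.mp hy with rfl | hy
          · exact hx1
          · rwa [Finset.mem_singleton.mp hy]
        have hc := (Finset.card_le_card hsub).trans h1
        rw [Finset.card_insert_of_notMem (by simp [hx.1]), Finset.card_singleton] at hc
        omega
      · intro x hx
        exact Finset.mem_erase.mpr ⟨fun hc => hmBA (hc ▸ hx), hAB hx⟩
    rw [hEq]
end m1

/-- A connected induced subgraph (on `≥ 2` vertices) of an acyclic graph
has at least two vertices of internal degree at most 1. -/
theorem two_leaves {V : Type*} [Fintype V] (T : SimpleGraph V) (hacyc : T.IsAcyclic)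
    (S : Finset V) (hconn : (T.induce (S : Set V)).Connected) (h2 : 2 ≤ S.card) :
    2 ≤ (S.filter (fun u => (S.filter fun y => T.Adj u y).card ≤ 1)).card := by
  set G := T.induce (S : Set V) with hG
  have hGacyc : G.IsAcyclic := by
    intro v c hc
    exact hacyc _ (hc.map (f := (SimpleGraph.Embedding.induce (S : Set V)).toHom)
      Subtype.val_injective)
  have htree : G.IsTree := ⟨hconn, hGacyc⟩
  have hcard : Fintype.card ↥(S : Set V) = S.card := by
    rw [← Fintype.card_coe S]
    exact Fintype.card_congr (Equiv.subtypeEquivRight fun x => Finset.mem_coe)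
  have hedges : G.edgeFinset.card + 1 = S.card := by
    rw [htree.card_edgeFinset, hcard]
  have hsum : ∑ v : ↥(S : Set V), G.degree v = 2 * G.edgeFinset.card :=
    SimpleGraph.sum_degrees_eq_twice_card_edges G
  -- degree in G equals the filter-card in S
  set d : V → ℕ := fun x => (S.filter fun y => T.Adj x y).card with hd
  have hdeg : ∀ v : ↥(S : Set V), G.degree v = d v := by
    intro v
    rw [SimpleGraph.degree]
    apply Finset.card_bij (fun (x : ↥(S : Set V)) _ => (x : V))
    · intro x hx
      rw [SimpleGraph.mem_neighborFinset] at hx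
      exact Finset.mem_filter.mpr ⟨x.2, hx⟩
    · intro x _ y _ hxy
      exact Subtype.val_injective hxy
    · intro y hy
      rw [Finset.mem_filter] at hy
      exact ⟨⟨y, hy.1⟩, (SimpleGraph.mem_neighborFinset _ _ _).mpr hy.2, rfl⟩
  have hdegpos : ∀ v : ↥(S : Set V), 1 ≤ G.degree v := by
    intro v
    have : 1 < Fintype.card ↥(S : Set V) := by omega
    obtain ⟨u', hu'⟩ := Fintype.exists_ne_of_one_lt_card this v
    obtain ⟨p⟩ := hconn.preconnected v u'
    cases p with
    | nil => exact absurd rfl hu'.symm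
    | cons h q => exact (SimpleGraph.degree_pos_iff_exists_adj _ _).mpr ⟨_, h⟩
  -- total sum over S
  have hsumS : ∑ x ∈ S, d x = 2 * G.edgeFinset.card := by
    rw [← hsum]
    rw [← Finset.sum_coe_sort S d]
    apply Finset.sum_congr rfl
    intro v _
    exact (hdeg v).symm
  set L := S.filter (fun u => (S.filter fun y => T.Adj u y).card ≤ 1) with hL
  by_contra hLc
  push_neg at hLc
  have hLS : L ⊆ S := Finset.filter_subset _ _
  have hsplit : ∑ x ∈ S, d x = ∑ x ∈ L, d x + ∑ x ∈ S \ L, d x := by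
    rw [← Finset.sum_union (Finset.disjoint_sdiff), Finset.union_sdiff_of_subset hLS]
  have h1 : ∀ x ∈ L, 1 ≤ d x := by
    intro x hx
    have := hdegpos ⟨x, hLS hx⟩
    rwa [hdeg] at this
  have h2' : ∀ x ∈ S \ L, 2 ≤ d x := by
    intro x hx
    rw [Finset.mem_sdiff] at hx
    have : ¬ (d x ≤ 1) := by
      intro hc
      exact hx.2 (Finset.mem_filter.mpr ⟨hx.1, hc⟩)
    omega
  have hlow1 : L.card * 1 ≤ ∑ x ∈ L, d x := by
    rw [← Finset.sum_const_nat fun _ _ => rfl]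
    exact Finset.sum_le_sum h1
  have hlow2 : (S \ L).card * 2 ≤ ∑ x ∈ S \ L, d x := by
    rw [← Finset.sum_const_nat fun _ _ => rfl]
    exact Finset.sum_le_sum h2'
  have hsd : (S \ L).card = S.card - L.card := Finset.card_sdiff_of_subset hLS
  have hLle : L.card ≤ S.card := Finset.card_le_card hLS
  omega

theorem stmt_8 {V : Type*} [Fintype V] (T : SimpleGraph V)
    (hconn : T.Connected) (hacyc : T.IsAcyclic) :
    ∃ ν : Finset V → Finset V,
      (∀ v : V, ν {v} = {v}) ∧
      ∀ S : Finset V, (T.induce (S : Set V)).Connected → 2 ≤ S.card →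
        ∃ u w, u ∈ S ∧ w ∈ S ∧ u ≠ w ∧
          (S.filter fun y => T.Adj u y).card ≤ 1 ∧
          (S.filter fun y => T.Adj w y).card ≤ 1 ∧
          ν S = {u, w} ∧ u ∈ ν (S.erase w) ∧ w ∈ ν (S.erase u) := by
  rcases isEmpty_or_nonempty V with hV | hV
  · refine ⟨id, fun v => isEmptyElim v, fun S _ hS => ?_⟩
    obtain ⟨x, -⟩ := Finset.card_pos.mp (by omega : 0 < S.card)
    exact isEmptyElim x
  letI : Inhabited V := Classical.inhabited_of_nonempty hV
  set f : V → ℕ := fun v => ((Fintype.equivFin V) v : ℕ) with hf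
  have hinj : Function.Injective f := fun a b hab =>
    (Fintype.equivFin V).injective (Fin.val_injective hab)
  set Lv : Finset V → Finset V :=
    fun S => S.filter (fun u => (S.filter fun y => T.Adj u y).card ≤ 1) with hLv
  refine ⟨fun S => if S.card ≤ 1 then S else {m1 f (Lv S), m1 f ((Lv S).erase (m1 f (Lv S)))},
    fun v => by simp, ?_⟩
  intro S hScon hScard
  have hL2 : 2 ≤ (Lv S).card := two_leaves T hacyc S hScon hScard
  have hLne : (Lv S).Nonempty := Finset.card_pos.mp (by omega)
  set w := m1 f (Lv S) with hw
  have hwL : w ∈ Lv S := m1_mem hLne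
  have hLEne : ((Lv S).erase w).Nonempty := by
    apply Finset.card_pos.mp
    rw [Finset.card_erase_of_mem hwL]; omega
  set u := m1 f ((Lv S).erase w) with hu
  have huLE : u ∈ (Lv S).erase w := m1_mem hLEne
  have huw : u ≠ w := (Finset.mem_erase.mp huLE).1
  have huL : u ∈ Lv S := (Finset.mem_erase.mp huLE).2
  have hLsubS : Lv S ⊆ S := Finset.filter_subset _ _
  have hleaf : ∀ x ∈ Lv S, (S.filter fun y => T.Adj x y).card ≤ 1 := by
    intro x hx; exact (Finset.mem_filter.mp hx).2
  -- main helper: if `a` is the max of the leaves of `S` other than `b`, then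
  -- `a ∈ ν (S.erase b)`.
  have main : ∀ a b : V, a ∈ Lv S → b ∈ Lv S → a ≠ b →
      m1 f ((Lv S).erase b) = a →
      a ∈ (if (S.erase b).card ≤ 1 then S.erase b
        else {m1 f (Lv (S.erase b)), m1 f ((Lv (S.erase b)).erase (m1 f (Lv (S.erase b))))}) := by
    intro a b haL hbL hab hmax
    by_cases hsmall : (S.erase b).card ≤ 1
    · rw [if_pos hsmall]
      exact Finset.mem_erase.mpr ⟨hab, hLsubS haL⟩
    · rw [if_neg hsmall]
      set A := (Lv S).erase b with hA
      set B := Lv (S.erase b) with hB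
      have hane : A.Nonempty := ⟨a, Finset.mem_erase.mpr ⟨hab, haL⟩⟩
      have hAB : A ⊆ B := by
        intro x hx
        rw [Finset.mem_erase] at hx
        obtain ⟨hxb, hxL⟩ := hx
        show x ∈ Lv (S.erase b)
        simp only [hLv, Finset.mem_filter] at hxL ⊢
        refine ⟨Finset.mem_erase.mpr ⟨hxb, hxL.1⟩, ?_⟩
        calc ((S.erase b).filter fun y => T.Adj x y).card
            ≤ (S.filter fun y => T.Adj x y).card :=
              Finset.card_le_card (Finset.filter_subset_filter _ (Finset.erase_subset _ _))
          _ ≤ 1 := hxL.2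
      have hBA : (B \ A).card ≤ 1 := by
        have hsub : B \ A ⊆ S.filter fun y => T.Adj b y := by
          intro x hx
          rw [Finset.mem_sdiff] at hx
          obtain ⟨hxB, hxA⟩ := hx
          simp only [hB, hLv, Finset.mem_filter] at hxB
          have hxb : x ≠ b := (Finset.mem_erase.mp hxB.1).1
          have hxS : x ∈ S := (Finset.mem_erase.mp hxB.1).2
          have hxnL : x ∉ Lv S := fun hc => hxA (Finset.mem_erase.mpr ⟨hxb, hc⟩)
          have hxbig : ¬ ((S.filter fun y => T.Adj x y).card ≤ 1) := by
            intro hc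
            exact hxnL (Finset.mem_filter.mpr ⟨hxS, hc⟩)
          have hadj : T.Adj x b := by
            by_contra hnadj
            apply hxbig
            calc (S.filter fun y => T.Adj x y).card
                ≤ ((S.erase b).filter fun y => T.Adj x y).card := by
                  apply Finset.card_le_card
                  intro y hy
                  rw [Finset.mem_filter] at hy ⊢
                  refine ⟨Finset.mem_erase.mpr ⟨?_, hy.1⟩, hy.2⟩
                  rintro rfl; exact hnadj hy.2
              _ ≤ 1 := hxB.2
          exact Finset.mem_filter.mpr ⟨hxS, hadj.symm⟩
        exact (Finset.card_le_card hsub).trans (hleaf b hbL)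
      rcases m1_top2 hinj hane hAB hBA with h | h
      · rw [hmax] at h
        exact Finset.mem_insert.mpr (Or.inl h)
      · rw [hmax] at h
        exact Finset.mem_insert.mpr (Or.inr (Finset.mem_singleton.mpr h))
  refine ⟨u, w, hLsubS huL, hLsubS hwL, huw, hleaf u huL, hleaf w hwL, ?_, ?_, ?_⟩
  · simp only [if_neg (by omega : ¬ S.card ≤ 1)]
    exact Finset.pair_comm w u
  · show u ∈ (if (S.erase w).card ≤ 1 then S.erase w
      else {m1 f (Lv (S.erase w)), m1 f ((Lv (S.erase w)).erase (m1 f (Lv (S.erase w))))})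
    exact main u w huL hwL huw hu.symm
  · show w ∈ (if (S.erase u).card ≤ 1 then S.erase u
      else {m1 f (Lv (S.erase u)), m1 f ((Lv (S.erase u)).erase (m1 f (Lv (S.erase u))))})
    refine main w u hwL huL huw.symm ?_
    apply m1_eq_of hinj (Finset.mem_erase.mpr ⟨huw.symm, hwL⟩)
    intro x hx
    exact le_m1 (Finset.mem_erase.mp hx).2
end

section
/- A graph Γ contains no K_{t,t} as a subgraph (with the two sides of size t allowed to use any 2t distinct vertices) if and only if Γ is (1/t², t)-sparse. -/
open scoped Classical
open Finset SimpleGraph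

lemma aux_count {α : Type*} [DecidableEq α] (A : Finset α) (t : ℕ) (a : α) (ha : a ∈ A) :
    ((A.powersetCard (t+1)).filter fun A' => a ∈ A').card = (A.erase a).card.choose t := by
  rw [← Finset.card_powersetCard]
  refine Finset.card_bij' (fun A' _ => A'.erase a) (fun B _ => insert a B) ?hi ?hj ?li ?ri
  · intro A' hA'
    simp only [Finset.mem_filter, Finset.mem_powersetCard] at hA'
    simp only [Finset.mem_powersetCard]
    refine ⟨Finset.erase_subset_erase a hA'.1.1, ?_⟩
    rw [Finset.card_erase_of_mem hA'.2, hA'.1.2]; rfl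
  · intro B hB
    simp only [Finset.mem_powersetCard] at hB
    have haB : a ∉ B := fun h => (Finset.mem_erase.mp (hB.1 h)).1 rfl
    simp only [Finset.mem_filter, Finset.mem_powersetCard]
    refine ⟨⟨?_, ?_⟩, Finset.mem_insert_self a B⟩
    · exact Finset.insert_subset ha (hB.1.trans (Finset.erase_subset a A))
    · rw [Finset.card_insert_of_notMem haB, hB.2]
  · intro A' hA'
    simp only [Finset.mem_filter] at hA'
    exact Finset.insert_erase hA'.2
  · intro B hB
    simp only [Finset.mem_powersetCard] at hB
    have haB : a ∉ B := fun h => (Finset.mem_erase.mp (hB.1 h)).1 rfl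
    exact Finset.erase_insert haB

lemma find_complete {V : Type*} [Fintype V] (Γ : SimpleGraph V) (t : ℕ) (ht : 1 ≤ t)
    (A B : Finset V) (hA : t ≤ A.card) (hB : t ≤ B.card)
    (hN : ((A ×ˢ B).filter fun p => ¬ Γ.Adj p.1 p.2).card * t^2 < A.card * B.card) :
    ∃ A' B' : Finset V, A' ⊆ A ∧ B' ⊆ B ∧ A'.card = t ∧ B'.card = t ∧
      ∀ a ∈ A', ∀ b ∈ B', Γ.Adj a b := by
  classical
  set bad := (A ×ˢ B).filter fun p => ¬ Γ.Adj p.1 p.2 with hbad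
  set S := A.powersetCard t with hS
  set T := B.powersetCard t with hT
  set m := A.card
  set n := B.card
  set Cm := m.choose t
  set Cn := n.choose t
  set Cm' := (m-1).choose (t-1)
  set Cn' := (n-1).choose (t-1)
  have hm1 : 1 ≤ m := ht.trans hA
  have hn1 : 1 ≤ n := ht.trans hB
  -- key sum identity
  have hsum : ∑ P ∈ S ×ˢ T, (bad.filter fun p => p.1 ∈ P.1 ∧ p.2 ∈ P.2).card
      = bad.card * (Cm' * Cn') := by
    have step1 : ∀ P : Finset V × Finset V,
        (bad.filter fun p => p.1 ∈ P.1 ∧ p.2 ∈ P.2).card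
        = ∑ p ∈ bad, if p.1 ∈ P.1 ∧ p.2 ∈ P.2 then 1 else 0 := by
      intro P; rw [Finset.card_filter]
    simp only [step1]
    rw [Finset.sum_comm]
    have step2 : ∀ p ∈ bad,
        (∑ P ∈ S ×ˢ T, if p.1 ∈ P.1 ∧ p.2 ∈ P.2 then 1 else 0) = Cm' * Cn' := by
      intro p hp
      have hpAB : p ∈ A ×ˢ B := (Finset.mem_filter.mp hp).1
      have hp1 : p.1 ∈ A := (Finset.mem_product.mp hpAB).1
      have hp2 : p.2 ∈ B := (Finset.mem_product.mp hpAB).2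
      rw [← Finset.card_filter]
      rw [hS, hT, Finset.filter_product (fun A' => p.1 ∈ A') (fun B' => p.2 ∈ B'), Finset.card_product]
      have ht' : t = (t-1)+1 := (Nat.succ_pred_eq_of_pos ht).symm
      rw [ht', aux_count A (t-1) p.1 hp1, aux_count B (t-1) p.2 hp2,
        Finset.card_erase_of_mem hp1, Finset.card_erase_of_mem hp2]
    rw [Finset.sum_congr rfl step2, Finset.sum_const, smul_eq_mul]
  -- the sum is < card (S ×ˢ T)
  have hCm : 0 < Cm := Nat.choose_pos hA
  have hCn : 0 < Cn := Nat.choose_pos hB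
  have hmC : m * Cm' = Cm * t := by
    have := Nat.add_one_mul_choose_eq (m-1) (t-1)
    simpa only [Nat.succ_eq_add_one, Nat.sub_add_cancel hm1, Nat.sub_add_cancel ht] using this
  have hnC : n * Cn' = Cn * t := by
    have := Nat.add_one_mul_choose_eq (n-1) (t-1)
    simpa only [Nat.succ_eq_add_one, Nat.sub_add_cancel hn1, Nat.sub_add_cancel ht] using this
  have hlt : bad.card * (Cm' * Cn') < Cm * Cn := by
    have hmn : 0 < m * n := Nat.mul_pos hm1 hn1
    refine Nat.lt_of_mul_lt_mul_left (a := m * n) ?_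
    calc (m*n) * (bad.card * (Cm'*Cn')) = bad.card * ((m*Cm') * (n*Cn')) := by ring
      _ = bad.card * ((Cm*t) * (Cn*t)) := by rw [hmC, hnC]
      _ = (bad.card * t^2) * (Cm*Cn) := by ring
      _ < (m*n) * (Cm*Cn) := Nat.mul_lt_mul_of_lt_of_le hN le_rfl (Nat.mul_pos hCm hCn)
  -- pigeonhole: some pair has zero bad pairs
  have hcardST : (S ×ˢ T).card = Cm * Cn := by
    rw [Finset.card_product, hS, hT, Finset.card_powersetCard, Finset.card_powersetCard]
  have : ∃ P ∈ S ×ˢ T, (bad.filter fun p => p.1 ∈ P.1 ∧ p.2 ∈ P.2).card = 0 := by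
    by_contra hcon
    push_neg at hcon
    have : (S ×ˢ T).card • 1 ≤ ∑ P ∈ S ×ˢ T, (bad.filter fun p => p.1 ∈ P.1 ∧ p.2 ∈ P.2).card :=
      Finset.card_nsmul_le_sum _ _ _ (fun P hP => Nat.one_le_iff_ne_zero.mpr (hcon P hP))
    rw [smul_eq_mul, mul_one, hcardST, hsum] at this
    exact absurd hlt (Nat.not_lt.mpr this)
  obtain ⟨P, hP, hP0⟩ := this
  obtain ⟨hPS, hPT⟩ := Finset.mem_product.mp hP
  rw [hS, Finset.mem_powersetCard] at hPS
  rw [hT, Finset.mem_powersetCard] at hPT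
  refine ⟨P.1, P.2, hPS.1, hPT.1, hPS.2, hPT.2, fun a ha b hb => ?_⟩
  by_contra hadj
  have hmem : (a, b) ∈ bad.filter fun p => p.1 ∈ P.1 ∧ p.2 ∈ P.2 := by
    simp only [hbad, Finset.mem_filter, Finset.mem_product]
    exact ⟨⟨⟨hPS.1 ha, hPT.1 hb⟩, hadj⟩, ha, hb⟩
  rw [Finset.card_eq_zero.mp hP0] at hmem
  exact absurd hmem (Finset.notMem_empty _)

lemma build_hom {V : Type*} [Fintype V] (Γ : SimpleGraph V) (t : ℕ)
    (A' B' : Finset V) (hA : A'.card = t) (hB : B'.card = t)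
    (hadj : ∀ a ∈ A', ∀ b ∈ B', Γ.Adj a b) :
    ∃ f : completeBipartiteGraph (Fin t) (Fin t) →g Γ, Function.Injective f := by
  classical
  let g1 : Fin t → V := fun i => (A'.equivFin.symm (Fin.cast hA.symm i) : V)
  let g2 : Fin t → V := fun i => (B'.equivFin.symm (Fin.cast hB.symm i) : V)
  have hg1mem : ∀ i, g1 i ∈ A' := fun i => (A'.equivFin.symm (Fin.cast hA.symm i)).2
  have hg2mem : ∀ i, g2 i ∈ B' := fun i => (B'.equivFin.symm (Fin.cast hB.symm i)).2
  have hg1inj : Function.Injective g1 := by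
    intro i j h
    have := Subtype.ext h
    have := A'.equivFin.symm.injective this
    simpa [Fin.ext_iff] using congrArg Fin.val this
  have hg2inj : Function.Injective g2 := by
    intro i j h
    have := Subtype.ext h
    have := B'.equivFin.symm.injective this
    simpa [Fin.ext_iff] using congrArg Fin.val this
  have hne : ∀ i j, g1 i ≠ g2 j := by
    intro i j h
    exact (hadj _ (hg1mem i) _ (hg2mem j)).ne h
  refine ⟨⟨Sum.elim g1 g2, ?_⟩, ?_⟩
  · rintro (i | i) (j | j) h <;> simp only [completeBipartiteGraph] at h <;>
      simp only [Sum.elim_inl, Sum.elim_inr] at *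
    · simp at h
    · exact hadj _ (hg1mem i) _ (hg2mem j)
    · exact (hadj _ (hg1mem j) _ (hg2mem i)).symm
    · simp at h
  · have : Function.Injective (Sum.elim g1 g2) := by
      rintro (i | i) (j | j) h <;> simp only [Sum.elim_inl, Sum.elim_inr] at h
      · exact congrArg Sum.inl (hg1inj h)
      · exact absurd h (hne i j)
      · exact absurd h.symm (hne j i)
      · exact congrArg Sum.inr (hg2inj h)
    exact this

theorem stmt_10 {V : Type*} [Fintype V] (Γ : SimpleGraph V) (t : ℕ) (ht : 1 ≤ t) :
    (¬ ∃ f : completeBipartiteGraph (Fin t) (Fin t) →g Γ, Function.Injective f) ↔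
      Sparse Γ (1 / (t : ℝ)^2) t := by
  classical
  have htR : (0:ℝ) < (t:ℝ) := by exact_mod_cast ht
  have ht2 : (0:ℝ) < (t:ℝ)^2 := by positivity
  constructor
  · intro hno A B hA hB
    by_contra hlt
    push_neg at hlt
    apply hno
    set e := ((A ×ˢ B).filter fun p => Γ.Adj p.1 p.2).card with he
    set N := ((A ×ˢ B).filter fun p => ¬ Γ.Adj p.1 p.2).card with hNdef
    have hEN : e + N = A.card * B.card := by
      rw [he, hNdef, Finset.card_filter_add_card_filter_not, Finset.card_product]
    have hENR : (e:ℝ) + N = (A.card:ℝ) * B.card := by exact_mod_cast hEN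
    have hlt' : ((t:ℝ)^2 - 1) * ((A.card:ℝ) * B.card) < (t:ℝ)^2 * e := by
      have h2 := mul_lt_mul_of_pos_left hlt ht2
      have h3 : (t:ℝ)^2 * ((1 - 1/(t:ℝ)^2) * A.card * B.card)
          = ((t:ℝ)^2 - 1) * ((A.card:ℝ) * B.card) := by
        field_simp
      linarith [h2, h3.symm.le, h3.le]
    have heq : (e:ℝ) = (A.card:ℝ) * B.card - N := by linarith
    rw [heq] at hlt'
    have keyR : (N:ℝ) * (t:ℝ)^2 < (A.card:ℝ) * B.card := by nlinarith
    have key : N * t^2 < A.card * B.card := by exact_mod_cast keyR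
    obtain ⟨A', B', _, _, hA', hB', hadj⟩ := find_complete Γ t ht A B hA hB key
    exact build_hom Γ t A' B' hA' hB' hadj
  · rintro hs ⟨f, hf⟩
    have hinj1 : Function.Injective (fun i : Fin t => f (Sum.inl i)) :=
      fun i j h => Sum.inl_injective (hf h)
    have hinj2 : Function.Injective (fun i : Fin t => f (Sum.inr i)) :=
      fun i j h => Sum.inr_injective (hf h)
    set A' := (Finset.univ : Finset (Fin t)).image (fun i => f (Sum.inl i)) with hA'def
    set B' := (Finset.univ : Finset (Fin t)).image (fun i => f (Sum.inr i)) with hB'def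
    have hA' : A'.card = t := by
      rw [hA'def, Finset.card_image_of_injective _ hinj1, Finset.card_univ, Fintype.card_fin]
    have hB' : B'.card = t := by
      rw [hB'def, Finset.card_image_of_injective _ hinj2, Finset.card_univ, Fintype.card_fin]
    have hadj : ∀ p ∈ A' ×ˢ B', Γ.Adj p.1 p.2 := by
      rintro ⟨a, b⟩ hp
      obtain ⟨ha, hb⟩ := Finset.mem_product.mp hp
      obtain ⟨i, _, rfl⟩ := Finset.mem_image.mp ha
      obtain ⟨j, _, rfl⟩ := Finset.mem_image.mp hb
      exact f.map_adj (by simp)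
    have hfull : ((A' ×ˢ B').filter fun p => Γ.Adj p.1 p.2) = A' ×ˢ B' :=
      Finset.filter_true_of_mem hadj
    have := hs A' B' hA'.ge hB'.ge
    rw [hfull, Finset.card_product, hA', hB'] at this
    push_cast at this
    have h1 : (1 - 1/(t:ℝ)^2) * t * t = (t:ℝ)*t - 1 := by field_simp
    rw [h1] at this
    linarith
end

section
/- For every tree T with at least two edges and every t ≥ 4, the graph Γ that is a disjoint union of cliques each of size ⌊t/4⌋ is (1/2, t)-sparse, and Γ itself contains no induced copy of T. Hence the bound Θ(tn) edges in the induced-tree Turán theorem for (c,t)-sparse host graphs is tight up to the constant factor. -/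
/-!
In `Γ` every vertex has fewer than `t / 4` neighbours, so two sets `A`, `B` with `|B| ≥ t` span at
most `|A| t / 4 ≤ |A| |B| / 2` edges.

Being a disjoint union of cliques means that `Γᶜ` is complete multipartite, and complete
multipartiteness passes to induced subgraphs. A tree with two edges has a vertex with two
neighbours; these are non-adjacent since a tree has no triangle, so the three vertices witness that
the complement of the tree is not complete multipartite.
-/

open scoped Classical
open Finset SimpleGraph

namespace SimpleGraph

variable {V : Type*} (G : SimpleGraph V)

theorem card_interedges_le_card_mul_maxDegree [Fintype V] [DecidableRel G.Adj] (s t : Finset V) :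
    #(G.interedges s t) ≤ #s * G.maxDegree := by
  classical
  calc #(G.interedges s t)
      ≤ ∑ x ∈ s, #{y ∈ t | G.Adj x y} := by
        rw [interedges, Rel.interedges_eq_biUnion]
        exact card_biUnion_le.trans (by simp)
    _ ≤ ∑ _x ∈ s, G.maxDegree := sum_le_sum fun x _ => by
        refine le_trans ?_ ((G.card_neighborFinset_eq_degree x).trans_le (G.degree_le_maxDegree x))
        exact card_le_card fun y hy => by simpa using (mem_filter.1 hy).2
    _ = #s * G.maxDegree := by rw [sum_const, smul_eq_mul]

theorem sparse_of_maxDegree_le [Fintype V] {c : ℝ} {t : ℕ} (hc : c ≤ 1)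
    (hΔ : (G.maxDegree : ℝ) ≤ (1 - c) * t) : Sparse G c t := by
  intro A B _ hB
  calc (#(G.interedges A B) : ℝ)
      ≤ #A * G.maxDegree := mod_cast G.card_interedges_le_card_mul_maxDegree A B
    _ ≤ #A * ((1 - c) * t) := by gcongr
    _ ≤ #A * ((1 - c) * #B) := by gcongr
    _ = (1 - c) * #A * #B := by ring

theorem exists_two_le_degree_of_card_lt [Fintype V] [DecidableRel G.Adj]
    (h : Fintype.card V < 2 * #G.edgeFinset) : ∃ v, 2 ≤ G.degree v := by
  by_contra! hdeg
  have : ∑ v, G.degree v ≤ Fintype.card V := by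
    simpa using sum_le_sum fun v (_ : v ∈ univ) => Nat.lt_succ_iff.mp (hdeg v)
  rw [sum_degrees_eq_twice_card_edges] at this
  omega

theorem exists_adj_adj_ne_of_two_le_degree [Fintype V] [DecidableRel G.Adj] {v : V}
    (h : 2 ≤ G.degree v) : ∃ w₁ w₂, G.Adj v w₁ ∧ G.Adj v w₂ ∧ w₁ ≠ w₂ := by
  rw [← card_neighborFinset_eq_degree] at h
  obtain ⟨w₁, h₁, w₂, h₂, hne⟩ := one_lt_card.mp h
  exact ⟨w₁, w₂, (G.mem_neighborFinset v w₁).mp h₁, (G.mem_neighborFinset v w₂).mp h₂, hne⟩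

variable {G}

theorem IsAcyclic.not_adj_of_adj_of_adj (hG : G.IsAcyclic) {v w₁ w₂ : V} (h₁ : G.Adj v w₁)
    (h₂ : G.Adj v w₂) : ¬G.Adj w₁ w₂ := by
  intro h
  have hpath : (Walk.cons h₁.symm (Walk.cons h₂ Walk.nil) : G.Walk w₁ w₂).IsPath := by
    simp [Walk.isPath_def, h₁.ne', h.ne, h₂.ne]
  have := congrArg (fun p : G.Path w₁ w₂ => p.1.length)
    ((hG.subsingleton_path w₁ w₂).elim (Path.singleton h) ⟨_, hpath⟩)
  simp at this

theorem IsTree.not_isCompleteMultipartite_compl [Fintype V] (hG : G.IsTree)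
    (h : 2 ≤ #G.edgeFinset) : ¬Gᶜ.IsCompleteMultipartite := by
  obtain ⟨v, hv⟩ := G.exists_two_le_degree_of_card_lt (by have := hG.card_edgeFinset; omega)
  obtain ⟨w₁, w₂, h₁, h₂, hne⟩ := G.exists_adj_adj_ne_of_two_le_degree hv
  refine not_isCompleteMultipartite_iff_exists_isPathGraph3Compl.mpr ⟨v, w₁, w₂, ?_, ?_, ?_⟩
  · exact (compl_adj G w₁ w₂).mpr ⟨hne, hG.isAcyclic.not_adj_of_adj_of_adj h₁ h₂⟩
  · exact fun h => ((compl_adj G v w₁).mp h).2 h₁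
  · exact fun h => ((compl_adj G v w₂).mp h).2 h₂

end SimpleGraph

def unionOfCliques (ι α : Type*) : SimpleGraph (ι × α) :=
  SimpleGraph.fromRel fun x y => x.1 = y.1

section unionOfCliques

variable {ι α : Type*}

theorem unionOfCliques_adj {x y : ι × α} : (unionOfCliques ι α).Adj x y ↔ x ≠ y ∧ x.1 = y.1 := by
  simp [unionOfCliques, eq_comm]

theorem maxDegree_unionOfCliques_le [Fintype ι] [Fintype α] :
    (unionOfCliques ι α).maxDegree ≤ Fintype.card α := by
  refine maxDegree_le_of_forall_degree_le _ _ fun x => ?_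
  rw [← card_neighborFinset_eq_degree, ← card_univ]
  refine (card_le_card fun y hy => ?_).trans (card_image_le (f := fun a => (x.1, a)))
  rw [mem_neighborFinset, unionOfCliques_adj] at hy
  exact mem_image.mpr ⟨y.2, mem_univ _, Prod.ext hy.2 rfl⟩

theorem isCompleteMultipartite_compl_unionOfCliques :
    (unionOfCliques ι α)ᶜ.IsCompleteMultipartite := by
  have not_adj {x y : ι × α} : ¬(unionOfCliques ι α)ᶜ.Adj x y ↔ x.1 = y.1 := by
    by_cases h : x = y <;> simp [unionOfCliques_adj, h]
  exact ⟨fun x y z hxy hyz => not_adj.mpr ((not_adj.mp hxy).trans (not_adj.mp hyz))⟩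

end unionOfCliques

theorem stmt_14_general {ι VT : Type*} [Fintype ι] [Fintype VT]
    (T : SimpleGraph VT) (hconn : T.Connected) (hacyc : T.IsAcyclic)
    (hT : 2 ≤ T.edgeFinset.card) (t : ℕ) :
    Sparse (SimpleGraph.fromRel fun x y : ι × Fin (t / 4) => x.1 = y.1) (1/2) t ∧
    IsEmpty (T ↪g SimpleGraph.fromRel fun x y : ι × Fin (t / 4) => x.1 = y.1) := by
  refine ⟨(unionOfCliques ι (Fin (t / 4))).sparse_of_maxDegree_le (by norm_num) ?_, ⟨fun f => ?_⟩⟩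
  · calc ((unionOfCliques ι (Fin (t / 4))).maxDegree : ℝ)
        ≤ (t / 4 : ℕ) := by exact_mod_cast (Fintype.card_fin (t / 4)) ▸ maxDegree_unionOfCliques_le
      _ ≤ (t : ℝ) / 4 := Nat.cast_div_le
      _ ≤ (1 - 1 / 2) * t := by linarith [(Nat.cast_nonneg t : (0 : ℝ) ≤ t)]
  · exact IsTree.not_isCompleteMultipartite_compl ⟨hconn, hacyc⟩ hT
      (isCompleteMultipartite_compl_unionOfCliques.comap (Embedding.complEquiv f))

theorem stmt_14 {ι VT : Type*} [Fintype ι] [Fintype VT]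
    (T : SimpleGraph VT) (hconn : T.Connected) (hacyc : T.IsAcyclic)
    (hT : 2 ≤ T.edgeFinset.card) (t : ℕ) (ht : 4 ≤ t) :
    Sparse (SimpleGraph.fromRel fun x y : ι × Fin (t / 4) => x.1 = y.1) (1/2) t ∧
    IsEmpty (T ↪g SimpleGraph.fromRel fun x y : ι × Fin (t / 4) => x.1 = y.1) :=
  stmt_14_general T hconn hacyc hT t
end

section
/- Let Γ be a (c,t)-sparse graph with c ≤ 1/2, and let G ⊆ Γ be a bipartite subgraph with parts U, R. Fix u ∈ U with deg_G(u) ≥ D, let Y ⊆ N_G(u) be a k-tuple such that |N_G(Y) \ N⁺_Γ({u})| ≥ M with M ≥ c^{−(b−k)}·t, and sample b−k further vertices uniformly at random from N_G(u) \ Y. Then with probability at least 1 − (b−k)·t/(D − k), the sampled set X' satisfies |N_G(Y) \ N⁺_Γ({u} ∪ X')| ≥ c^{b−k}·M. -/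
open scoped Classical
open Finset SimpleGraph

/-!
Call a vertex `s` bad for `W` if it has fewer than `c * #W` non-neighbours in `W`. If `#W ≥ t`,
sparseness allows at most `t` bad vertices, since `t` of them would span more than
`(1 - c) * t * #W` edges with `W`. Choose the tuple one coordinate at a time: the first
coordinate is bad with probability at most `t / #S`, and otherwise its non-neighbourhood
`W'` still has `#W' ≥ c * #W ≥ c⁻¹ ^ (n - 1) * t`, so by induction the final common
non-neighbourhood falls below `c ^ n * #W` with probability at most `n * t / #S`, and
`#S ≥ D - k`.
-/

theorem card_filter_fin_cons {α : Type*} [Fintype α] {n : ℕ} (P : (Fin (n + 1) → α) → Prop) :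
    #(univ.filter P) = ∑ a : α, #(univ.filter fun g : Fin n → α => P (Fin.cons a g)) := by
  simp only [card_filter]
  rw [← (Fin.consEquiv fun _ => α).sum_comp, Fintype.sum_prod_type]
  rfl

namespace Sparse

variable {V : Type*} [Fintype V] {Γ : SimpleGraph V} {c : ℝ} {t : ℕ}

theorem card_filter_card_nonNbrs_lt_le (hsp : Sparse Γ c t) {W : Finset V} (hW : t ≤ #W)
    (S : Finset V) : #(S.filter fun s => (#(W.filter fun w => ¬ Γ.Adj s w) : ℝ) < c * #W) ≤ t := by
  set A := S.filter fun s => (#(W.filter fun w => ¬ Γ.Adj s w) : ℝ) < c * #W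
  by_contra! hA
  have hAne : A.Nonempty := card_pos.mp (t.zero_le.trans_lt hA)
  have hdense : ∀ s ∈ A, (1 - c) * #W < (#(W.filter fun w => Γ.Adj s w) : ℝ) := by
    intro s hs
    have hsplit := card_filter_add_card_filter_not (s := W) (fun w => Γ.Adj s w)
    have hs' := (mem_filter.mp hs).2
    rify at hsplit
    linarith
  have hedges : (#((A ×ˢ W).filter fun p => Γ.Adj p.1 p.2) : ℝ)
      = ∑ s ∈ A, (#(W.filter fun w => Γ.Adj s w) : ℝ) := by
    rw [card_filter, sum_product]
    push_cast [card_filter]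
    rfl
  have hlt := sum_lt_sum_of_nonempty hAne hdense
  rw [sum_const, nsmul_eq_mul, ← hedges] at hlt
  linarith [hsp A W hA.le hW]

end Sparse

section Tuples

variable {V : Type*}

noncomputable def badTuples (Γ : SimpleGraph V) (c : ℝ) (S W : Finset V) (n : ℕ) :
    Finset (Fin n → S) :=
  univ.filter fun f => (#(W.filter fun w => ∀ i, ¬ Γ.Adj (f i) w) : ℝ) < c ^ n * #W

theorem filter_cons_mem_badTuples_subset {Γ : SimpleGraph V} {c : ℝ} (hc : 0 ≤ c)
    {S W : Finset V} {n : ℕ} (s : S)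
    (hs : c * #W ≤ (#(W.filter fun w => ¬ Γ.Adj s w) : ℝ)) :
    univ.filter (fun g => Fin.cons s g ∈ badTuples Γ c S W (n + 1))
      ⊆ badTuples Γ c S (W.filter fun w => ¬ Γ.Adj s w) n := by
  intro g hg
  simp only [badTuples, mem_filter, mem_univ, true_and] at hg ⊢
  have hnonNbrs : (W.filter fun w => ∀ i, ¬ Γ.Adj ((Fin.cons s g : Fin (n + 1) → S) i) w)
      = (W.filter fun w => ¬ Γ.Adj s w).filter fun w => ∀ i, ¬ Γ.Adj (g i) w := by
    rw [filter_filter]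
    simp only [Fin.forall_fin_succ, Fin.cons_zero, Fin.cons_succ]
  rw [hnonNbrs] at hg
  calc _ < c ^ (n + 1) * #W := hg
    _ = c ^ n * (c * #W) := by ring
    _ ≤ _ := by gcongr

theorem card_filter_cons_mem_badTuples_mul_le {Γ : SimpleGraph V} {c : ℝ} {t : ℕ} (hc : 0 < c)
    {S W : Finset V} {n B : ℕ} (ih : ∀ W' : Finset V, c⁻¹ ^ n * t ≤ #W' →
      #(badTuples Γ c S W' n) * #S ≤ B)
    (hW : c⁻¹ ^ (n + 1) * t ≤ #W) (s : S) :
    #(univ.filter fun g => Fin.cons s g ∈ badTuples Γ c S W (n + 1)) * #S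
      ≤ (if (#(W.filter fun w => ¬ Γ.Adj s w) : ℝ) < c * #W then #S ^ (n + 1) else 0) + B := by
  split_ifs with hs
  · have hall : #(univ.filter fun g => Fin.cons s g ∈ badTuples Γ c S W (n + 1)) ≤ #S ^ n := by
      simpa using card_filter_le (univ : Finset (Fin n → S)) _
    rw [pow_succ]
    exact (Nat.mul_le_mul_right _ hall).trans (Nat.le_add_right _ _)
  · rw [zero_add]
    rw [not_lt] at hs
    have hW' : c⁻¹ ^ n * t ≤ (#(W.filter fun w => ¬ Γ.Adj s w) : ℝ) := by
      calc c⁻¹ ^ n * t = c * (c⁻¹ ^ (n + 1) * t) := by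
            rw [pow_succ]; field_simp
        _ ≤ c * #W := by gcongr
        _ ≤ _ := hs
    exact (Nat.mul_le_mul_right _
      (card_le_card (filter_cons_mem_badTuples_subset hc.le s hs))).trans (ih _ hW')

/-- The iterated non-neighbour lemma. -/
theorem Sparse.card_badTuples_mul_le [Fintype V] {Γ : SimpleGraph V} {c : ℝ} {t : ℕ} (hc : 0 < c)
    (hc1 : c ≤ 1) (hsp : Sparse Γ c t) (S : Finset V) (n : ℕ) :
    ∀ W : Finset V, c⁻¹ ^ n * t ≤ #W → #(badTuples Γ c S W n) * #S ≤ n * t * #S ^ n := by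
  induction n with
  | zero =>
    intro W _
    simp [badTuples]
  | succ n ih =>
    intro W hW
    have htW : t ≤ #W := by
      have : (t : ℝ) ≤ c⁻¹ ^ (n + 1) * t :=
        le_mul_of_one_le_left t.cast_nonneg (one_le_pow₀ ((one_le_inv₀ hc).mpr hc1))
      exact_mod_cast this.trans hW
    set Bad := S.filter fun s => (#(W.filter fun w => ¬ Γ.Adj s w) : ℝ) < c * #W
    have hBad : ∑ s : S, (if (s : V) ∈ Bad then #S ^ (n + 1) else 0) = #Bad * #S ^ (n + 1) := by
      rw [sum_coe_sort S fun s => if s ∈ Bad then #S ^ (n + 1) else 0, ← sum_filter,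
        sum_const, smul_eq_mul]
      congr 2
      exact filter_mem_eq_inter.trans (inter_eq_right.mpr (filter_subset _ _))
    calc #(badTuples Γ c S W (n + 1)) * #S
        = ∑ s : S, #(univ.filter fun g => Fin.cons s g ∈ badTuples Γ c S W (n + 1)) * #S := by
          rw [badTuples, card_filter_fin_cons, sum_mul]
          simp
      _ ≤ ∑ s : S, ((if (s : V) ∈ Bad then #S ^ (n + 1) else 0) + n * t * #S ^ n) :=
          sum_le_sum fun s _ => by
            simpa [Bad, s.2] using card_filter_cons_mem_badTuples_mul_le hc ih hW s
      _ = #Bad * #S ^ (n + 1) + #S * (n * t * #S ^ n) := by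
          rw [sum_add_distrib, hBad, sum_const, card_univ, Fintype.card_coe, smul_eq_mul]
      _ ≤ t * #S ^ (n + 1) + #S * (n * t * #S ^ n) := by
          gcongr
          exact hsp.card_filter_card_nonNbrs_lt_le htW S
      _ = (n + 1) * t * #S ^ (n + 1) := by ring

theorem Sparse.one_sub_div_le_card_compl_badTuples_div [Fintype V] {Γ : SimpleGraph V} {c : ℝ}
    {t : ℕ} (hc : 0 < c) (hc1 : c ≤ 1) (hsp : Sparse Γ c t) {S W : Finset V} {n : ℕ}
    (hW : c⁻¹ ^ n * t ≤ #W) (hS : 0 < #S) :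
    1 - n * t / (#S : ℝ) ≤ #(univ \ badTuples Γ c S W n) / (#S : ℝ) ^ n := by
  have hbad : (#(badTuples Γ c S W n) : ℝ) * #S ≤ n * t * #S ^ n := by
    exact_mod_cast hsp.card_badTuples_mul_le hc hc1 S n W hW
  have hcompl : #(univ \ badTuples Γ c S W n) + #(badTuples Γ c S W n) = #S ^ n := by
    rw [card_sdiff_add_card_eq_card (subset_univ _), card_univ, Fintype.card_fun,
      Fintype.card_coe, Fintype.card_fin]
  have hS' : (0 : ℝ) < #S := by exact_mod_cast hS
  rw [le_div_iff₀ (by positivity)]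
  rify at hcompl
  calc (1 - n * t / (#S : ℝ)) * #S ^ n = #S ^ n - n * t * #S ^ n / #S := by ring
    _ ≤ #(univ \ badTuples Γ c S W n) := by linarith [(le_div_iff₀ hS').mpr hbad]

end Tuples

theorem stmt_16_general {V : Type*} [Fintype V] (Γ G : SimpleGraph V) (c M : ℝ) (t k b D : ℕ)
    (hc : 0 < c) (hc' : c ≤ 1/2) (hsparse : Sparse Γ c t)
    (u : V) (hD : D ≤ G.degree u) (hkD : k < D)
    (Y : Finset V) (hY : Y ⊆ G.neighborFinset u) (hYcard : Y.card = k)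
    (hM : (c⁻¹ : ℝ) ^ (b - k) * t ≤ M)
    (hW : M ≤ ((((Finset.univ.filter fun z => ∀ y ∈ Y, G.Adj y z) \
        Γ.neighborFinset u)).card : ℝ)) :
    1 - (b - k : ℕ) * (t : ℝ) / ((D : ℝ) - (k : ℝ)) ≤
      ((Finset.univ.filter fun f : Fin (b - k) → {x // x ∈ G.neighborFinset u \ Y} =>
          c ^ (b - k) * M ≤
            (((((Finset.univ.filter fun z => ∀ y ∈ Y, G.Adj y z) \
              Γ.neighborFinset u)).filter fun w => ∀ i, ¬ Γ.Adj ((f i) : V) w).card : ℝ)).card : ℝ)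
        / ((G.neighborFinset u \ Y).card : ℝ) ^ (b - k) := by
  set S := G.neighborFinset u \ Y
  set W := (univ.filter fun z => ∀ y ∈ Y, G.Adj y z) \ Γ.neighborFinset u
  have hd : 0 < (D : ℝ) - k := sub_pos.mpr (by exact_mod_cast hkD)
  have hdS : (D : ℝ) - k ≤ #S := by
    rw [card_sdiff_of_subset hY, hYcard, card_neighborFinset_eq_degree,
      Nat.cast_sub (hkD.le.trans hD)]
    gcongr
  have hS : 0 < #S := by exact_mod_cast hd.trans_le hdS
  have hgood : univ \ badTuples Γ c S W (b - k) ⊆ univ.filter fun f : Fin (b - k) → S =>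
      c ^ (b - k) * M ≤ (#(W.filter fun w => ∀ i, ¬ Γ.Adj (f i) w) : ℝ) := by
    intro f hf
    simp only [badTuples, mem_sdiff, mem_filter, mem_univ, true_and, not_lt] at hf ⊢
    exact (mul_le_mul_of_nonneg_left hW (by positivity)).trans hf
  calc 1 - (b - k : ℕ) * (t : ℝ) / ((D : ℝ) - k) ≤ 1 - (b - k : ℕ) * t / (#S : ℝ) := by gcongr
    _ ≤ #(univ \ badTuples Γ c S W (b - k)) / (#S : ℝ) ^ (b - k) :=
        hsparse.one_sub_div_le_card_compl_badTuples_div hc (by linarith) (hM.trans hW) hS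
    _ ≤ _ := by gcongr

theorem stmt_16 {V : Type*} [Fintype V] (Γ G : SimpleGraph V) (c M : ℝ) (t k b D : ℕ)
    (hc : 0 < c) (hc' : c ≤ 1/2) (hsparse : Sparse Γ c t) (hGΓ : G ≤ Γ)
    (U R : Finset V)
    (hbip : ∀ x y : V, G.Adj x y → (x ∈ U ∧ y ∈ R) ∨ (x ∈ R ∧ y ∈ U))
    (u : V) (hu : u ∈ U) (hD : D ≤ G.degree u) (hkb : k ≤ b) (hkD : k < D)
    (Y : Finset V) (hY : Y ⊆ G.neighborFinset u) (hYcard : Y.card = k)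
    (hM : (c⁻¹ : ℝ) ^ (b - k) * t ≤ M)
    (hW : M ≤ ((((Finset.univ.filter fun z => ∀ y ∈ Y, G.Adj y z) \
        Γ.neighborFinset u)).card : ℝ)) :
    1 - (b - k : ℕ) * (t : ℝ) / ((D : ℝ) - (k : ℝ)) ≤
      ((Finset.univ.filter fun f : Fin (b - k) → {x // x ∈ G.neighborFinset u \ Y} =>
          c ^ (b - k) * M ≤
            (((((Finset.univ.filter fun z => ∀ y ∈ Y, G.Adj y z) \
              Γ.neighborFinset u)).filter fun w => ∀ i, ¬ Γ.Adj ((f i) : V) w).card : ℝ)).card : ℝ)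
        / ((G.neighborFinset u \ Y).card : ℝ) ^ (b - k) :=
  stmt_16_general Γ G c M t k b D hc hc' hsparse u hD hkD Y hY hYcard hM hW
end

section
/- Let T be a tree with exactly one edge {u,w}, let Γ be a (c,t)-sparse graph, and let G ⊆ Γ have minimum degree at least Ct with C > 4/κ for a given 0 < κ < 1 (C ≥ 4/κ suffices). Sample a uniformly random ordered edge (x_u, x_w) of G. Then with probability at least 1 − κ, both |N_G(x_u) \ N_Γ(x_w)| ≥ c|N_G(x_u)| and |N_G(x_w) \ N_Γ(x_u)| ≥ c|N_G(x_w)| hold; i.e., the random edge is a c-unique copy of T. -/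
open scoped Classical
open Finset SimpleGraph

/-!
For a vertex `x` of minimum degree at least `C t ≥ t`, sparseness of `Γ` applied to `N_G(x)` and
the set of its neighbours `y` with `|N_G(x) \ N_Γ(y)| < c |N_G(x)|` shows that fewer than `t`
neighbours are bad for `x`. Hence at most `2 |V| t` ordered edges fail one of the two conditions,
while there are at least `C t |V| ≥ 4 |V| t / κ` ordered edges in total.
-/

section Counting

variable {α β : Type*} [Fintype α] [Fintype β]

lemma card_filter_prod_eq_sum_left (R : α × β → Prop) [DecidablePred R] :
    #{p | R p} = ∑ a, #{b | R (a, b)} := by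
  simp only [card_filter, Fintype.sum_prod_type]

lemma card_filter_prod_eq_sum_right (R : α × β → Prop) [DecidablePred R] :
    #{p | R p} = ∑ b, #{a | R (a, b)} := by
  simp only [card_filter, Fintype.sum_prod_type_right]

lemma Finset.card_filter_le_card_filter_and_add {γ : Type*} (s : Finset γ) (Q P₁ P₂ : γ → Prop) :
    #{a ∈ s | Q a} ≤ #{a ∈ s | Q a ∧ P₁ a ∧ P₂ a} + #{a ∈ s | Q a ∧ ¬P₁ a} +
      #{a ∈ s | Q a ∧ ¬P₂ a} :=
  calc #{a ∈ s | Q a}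
      ≤ #({a ∈ s | Q a ∧ P₁ a ∧ P₂ a} ∪ {a ∈ s | Q a ∧ ¬P₁ a} ∪ {a ∈ s | Q a ∧ ¬P₂ a}) :=
        card_le_card fun a ha => by simp only [mem_union, mem_filter] at ha ⊢; tauto
    _ ≤ _ := (card_union_le _ _).trans (Nat.add_le_add_right (card_union_le _ _) _)

end Counting

namespace SimpleGraph

variable {V : Type*} [Fintype V]

lemma card_filter_adj_eq_sum_degree (G : SimpleGraph V) :
    #{p : V × V | G.Adj p.1 p.2} = ∑ v, G.degree v := by
  simp only [card_filter_prod_eq_sum_left, ← card_neighborFinset_eq_degree,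
    neighborFinset_eq_filter]

lemma card_filter_product_adj_eq_sum (Γ : SimpleGraph V) (A B : Finset V) :
    #((A ×ˢ B).filter fun p => Γ.Adj p.1 p.2) = ∑ y ∈ B, #(A ∩ Γ.neighborFinset y) := by
  rw [card_filter, sum_product, sum_comm]
  refine sum_congr rfl fun y _ => ?_
  rw [← card_filter]
  congr 1
  ext x
  simp [adj_comm]

lemma card_filter_adj_and_le (G : SimpleGraph V) (P : V → V → Prop) {t : ℕ}
    (h : ∀ x, #{y ∈ G.neighborFinset x | P x y} ≤ t) :
    #{p : V × V | G.Adj p.1 p.2 ∧ P p.1 p.2} ≤ Fintype.card V * t := by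
  rw [card_filter_prod_eq_sum_left, ← smul_eq_mul, ← card_univ]
  refine sum_le_card_nsmul _ _ _ fun x _ => ?_
  simpa only [neighborFinset_eq_filter, filter_filter] using h x

lemma card_filter_adj_and_swap_le (G : SimpleGraph V) (P : V → V → Prop) {t : ℕ}
    (h : ∀ x, #{y ∈ G.neighborFinset x | P x y} ≤ t) :
    #{p : V × V | G.Adj p.1 p.2 ∧ P p.2 p.1} ≤ Fintype.card V * t := by
  rw [card_filter_prod_eq_sum_right, ← smul_eq_mul, ← card_univ]
  refine sum_le_card_nsmul _ _ _ fun y _ => ?_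
  simpa only [neighborFinset_eq_filter, filter_filter, adj_comm] using h y

end SimpleGraph

theorem Sparse.card_filter_card_sdiff_lt {V : Type*} [Fintype V] {Γ : SimpleGraph V} {c : ℝ}
    {t : ℕ} (hΓ : Sparse Γ c t) (ht : 1 ≤ t) {A : Finset V} (hA : t ≤ #A) :
    #{y ∈ A | (#(A \ Γ.neighborFinset y) : ℝ) < c * #A} < t := by
  set B := {y ∈ A | (#(A \ Γ.neighborFinset y) : ℝ) < c * #A}
  by_contra! hB
  have hBne : B.Nonempty := card_pos.mp (by omega)
  have hdense : ∀ y ∈ B, (1 - c) * #A < (#(A ∩ Γ.neighborFinset y) : ℝ) := by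
    intro y hy
    have hsplit : (#(A \ Γ.neighborFinset y) : ℝ) + #(A ∩ Γ.neighborFinset y) = #A := by
      exact_mod_cast card_sdiff_add_card_inter A (Γ.neighborFinset y)
    linarith [(mem_filter.mp hy).2]
  have hsparse := hΓ A B hA hB
  rw [Γ.card_filter_product_adj_eq_sum, Nat.cast_sum] at hsparse
  have hdense_sum := sum_lt_sum_of_nonempty hBne hdense
  rw [sum_const, nsmul_eq_mul] at hdense_sum
  linarith

lemma one_sub_le_div_of_le_add {κ C m total good : ℝ} (hκ : 0 < κ) (hC : 4 / κ ≤ C)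
    (hm : 0 < m) (htotal : C * m ≤ total) (hgood : total ≤ good + 2 * m) :
    1 - κ ≤ good / total := by
  have hκC : 4 ≤ κ * C := by rwa [div_le_iff₀ hκ, mul_comm] at hC
  have hCpos : 0 < C := (div_pos four_pos hκ).trans_le hC
  have htotal_pos : 0 < total := (mul_pos hCpos hm).trans_le htotal
  have : 4 * m ≤ κ * total := by nlinarith
  rw [le_div_iff₀ htotal_pos]
  nlinarith

theorem stmt_17_general {V : Type*} [Fintype V] [Nonempty V] (Γ G : SimpleGraph V)
    (c C κ : ℝ) (t : ℕ) (ht : 1 ≤ t)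
    (hκ₀ : 0 < κ) (hκ₁ : κ < 1) (hC : 4 / κ ≤ C)
    (hsparse : Sparse Γ c t)
    (hmindeg : ∀ v : V, C * t ≤ (G.degree v : ℝ)) :
    1 - κ ≤
      ((Finset.univ.filter fun p : V × V => G.Adj p.1 p.2 ∧
          c * (G.neighborFinset p.1).card ≤
            (((G.neighborFinset p.1) \ (Γ.neighborFinset p.2)).card : ℝ) ∧
          c * (G.neighborFinset p.2).card ≤
            (((G.neighborFinset p.2) \ (Γ.neighborFinset p.1)).card : ℝ)).card : ℝ)
        / ((Finset.univ.filter fun p : V × V => G.Adj p.1 p.2).card : ℝ) := by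
  have hC₁ : 1 ≤ C := by
    have : 4 < 4 / κ := (lt_div_iff₀ hκ₀).mpr (by linarith)
    linarith
  have hdeg (x : V) : t ≤ #(G.neighborFinset x) := by
    have : (t : ℝ) ≤ G.degree x := by nlinarith [hmindeg x]
    rw [card_neighborFinset_eq_degree]
    exact_mod_cast this
  have hfew (x : V) := (hsparse.card_filter_card_sdiff_lt ht (hdeg x)).le
  have hbad₁ := G.card_filter_adj_and_le _ hfew
  have hbad₂ := G.card_filter_adj_and_swap_le _ hfew
  have hcover := card_filter_le_card_filter_and_add univ (fun p : V × V => G.Adj p.1 p.2)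
    (fun p => c * #(G.neighborFinset p.1) ≤ (#(G.neighborFinset p.1 \ Γ.neighborFinset p.2) : ℝ))
    (fun p => c * #(G.neighborFinset p.2) ≤ (#(G.neighborFinset p.2 \ Γ.neighborFinset p.1) : ℝ))
  simp only [not_le] at hcover
  have htotal : C * (Fintype.card V * t) ≤ (#{p : V × V | G.Adj p.1 p.2} : ℝ) := by
    rw [G.card_filter_adj_eq_sum_degree, Nat.cast_sum]
    calc C * (Fintype.card V * t) = ∑ _v : V, C * t := by
          rw [sum_const, card_univ, nsmul_eq_mul]; ring
      _ ≤ _ := sum_le_sum fun v _ => hmindeg v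
  refine one_sub_le_div_of_le_add hκ₀ hC (by positivity) htotal ?_
  exact_mod_cast (hcover.trans (by omega) : _ ≤ _ + 2 * (Fintype.card V * t))

theorem stmt_17 {V : Type*} [Fintype V] [Nonempty V] (Γ G : SimpleGraph V)
    (c C κ : ℝ) (t : ℕ) (hc : 0 < c) (ht : 1 ≤ t)
    (hκ₀ : 0 < κ) (hκ₁ : κ < 1) (hC : 4 / κ ≤ C)
    (hsparse : Sparse Γ c t) (hGΓ : G ≤ Γ)
    (hmindeg : ∀ v : V, C * t ≤ (G.degree v : ℝ)) :
    1 - κ ≤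
      ((Finset.univ.filter fun p : V × V => G.Adj p.1 p.2 ∧
          c * (G.neighborFinset p.1).card ≤
            (((G.neighborFinset p.1) \ (Γ.neighborFinset p.2)).card : ℝ) ∧
          c * (G.neighborFinset p.2).card ≤
            (((G.neighborFinset p.2) \ (Γ.neighborFinset p.1)).card : ℝ)).card : ℝ)
        / ((Finset.univ.filter fun p : V × V => G.Adj p.1 p.2).card : ℝ) :=
  stmt_17_general Γ G c C κ t ht hκ₀ hκ₁ hC hsparse hmindeg
end

section
/- Let P be a probability distribution on a finite set V with max_{v∈V} P(v) ≤ θ for some θ ∈ (0,1]. Then P can be written as a convex combination of probability distributions, each of which is uniform on its support, where each support has size exactly ⌊1/θ⌋. -/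
/-!
Scaling by `k = ⌊1/θ⌋₊` turns `P` into a point `f = k • P` of the hypersimplex
`{f : V → [0,1] | ∑ f = k}`, and uniform distributions on `k`-sets into indicators of `k`-sets,
so it suffices to show that the hypersimplex lies in the convex hull of these indicators.
Induct on the number of coordinates of `f` strictly between `0` and `1`: choose a `k`-set `s`
containing every coordinate equal to `1` and contained in the support, and write
`f = α • 1_s + (1 - α) • g` with `α` as large as possible. Then `g` is again in the hypersimplex,
and one more coordinate has become `0` or `1`.
-/

open scoped Classical
open Finset

section

variable {V : Type*}

def hypersimplex (V : Type*) [Fintype V] (k : ℕ) : Set (V → ℝ) :=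
  {f | (∀ v, f v ∈ Set.Icc 0 1) ∧ ∑ v, f v = k}

def indicatorsOfCard (V : Type*) (k : ℕ) : Set (V → ℝ) :=
  {x | ∃ s : Finset V, #s = k ∧ x = (s : Set V).indicator 1}

noncomputable def fractionalSupport [Fintype V] (f : V → ℝ) : Finset V :=
  univ.filter fun v => f v ∈ Set.Ioo 0 1

noncomputable def removeIndicator (f : V → ℝ) (s : Finset V) (α : ℝ) : V → ℝ :=
  fun v => (f v - α * (s : Set V).indicator 1 v) / (1 - α)

lemma eq_smul_indicator_add_smul_removeIndicator {f : V → ℝ} {s : Finset V} {α : ℝ}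
    (hα : α ≠ 1) :
    f = α • (s : Set V).indicator 1 + (1 - α) • removeIndicator f s α := by
  ext v
  have : 1 - α ≠ 0 := sub_ne_zero.2 hα.symm
  simp only [removeIndicator, Pi.add_apply, Pi.smul_apply, smul_eq_mul]
  field_simp
  ring

lemma exists_fin_of_mem_convexHull_indicatorsOfCard {k : ℕ} {f : V → ℝ}
    (hf : f ∈ convexHull ℝ (indicatorsOfCard V k)) :
    ∃ (n : ℕ) (α : Fin n → ℝ) (S : Fin n → Finset V), (∀ i, 0 ≤ α i) ∧ ∑ i, α i = 1 ∧
      (∀ i, #(S i) = k) ∧ ∀ v, f v = ∑ i, α i * (S i : Set V).indicator 1 v := by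
  obtain ⟨ι, _, w, z, hw₀, hw₁, hz, rfl⟩ := mem_convexHull_iff_exists_fintype.1 hf
  choose S hS hzS using hz
  let e := Fintype.equivFin ι
  refine ⟨_, w ∘ e.symm, S ∘ e.symm, fun i => hw₀ _, ?_, fun i => hS _, fun v => ?_⟩
  · rw [← hw₁, ← e.symm.sum_comp]; rfl
  · rw [Finset.sum_apply, ← e.symm.sum_comp]
    simp [hzS]

variable [Fintype V] {k : ℕ} {f : V → ℝ}

lemma fractionalSupport_removeIndicator_subset {s : Finset V} {α : ℝ} (hin : ∀ v ∈ s, α ≤ f v)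
    (hout : ∀ v ∉ s, f v ≤ 1 - α) (hα₀ : 0 < α) (hα₁ : α < 1) :
    fractionalSupport (removeIndicator f s α) ⊆ fractionalSupport f := by
  have hα' : 0 < 1 - α := sub_pos.2 hα₁
  intro v hv
  simp only [fractionalSupport, mem_filter, mem_univ, true_and, Set.mem_Ioo,
    removeIndicator] at hv ⊢
  by_cases hvs : v ∈ s
  · simp only [Set.indicator_of_mem (mem_coe.2 hvs), Pi.one_apply, mul_one,
      div_lt_one hα'] at hv
    exact ⟨by linarith [hin v hvs], by linarith [hv.2]⟩
  · simp only [Set.indicator_of_notMem (mt mem_coe.1 hvs), mul_zero, sub_zero] at hv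
    exact ⟨(div_pos_iff_of_pos_right hα').1 hv.1, by linarith [hout v hvs]⟩

lemma notMem_fractionalSupport_removeIndicator {s : Finset V} {α : ℝ} {v : V} (hα : α < 1)
    (hv : if v ∈ s then f v = α else f v = 1 - α) :
    v ∉ fractionalSupport (removeIndicator f s α) := by
  have hα' : 1 - α ≠ 0 := by linarith
  simp only [fractionalSupport, mem_filter, mem_univ, true_and, Set.mem_Ioo, removeIndicator]
  split_ifs at hv with hvs <;> simp [hvs, hv, hα']

namespace hypersimplex

lemma card_filter_eq_one_le (hf : f ∈ hypersimplex V k) :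
    #(univ.filter fun v => f v = 1) ≤ k := by
  have : (#(univ.filter fun v => f v = 1) : ℝ) ≤ k := by
    rw [← hf.2, card_eq_sum_ones, Nat.cast_sum, sum_filter]
    exact sum_le_sum fun v _ => by split_ifs with h <;> simp [h, (hf.1 v).1]
  exact_mod_cast this

lemma le_card_filter_pos (hf : f ∈ hypersimplex V k) :
    k ≤ #(univ.filter fun v => 0 < f v) := by
  have : (k : ℝ) ≤ #(univ.filter fun v => 0 < f v) := by
    rw [← hf.2, card_eq_sum_ones, Nat.cast_sum, sum_filter]
    refine sum_le_sum fun v _ => ?_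
    split_ifs with h
    · simpa using (hf.1 v).2
    · exact not_lt.1 h
  exact_mod_cast this

lemma exists_card_eq (hf : f ∈ hypersimplex V k) :
    ∃ s : Finset V, #s = k ∧ (∀ v, f v = 1 → v ∈ s) ∧ ∀ v ∈ s, 0 < f v := by
  have hsub : univ.filter (fun v => f v = 1) ⊆ univ.filter fun v => 0 < f v :=
    fun v => by simp +contextual
  obtain ⟨s, hones, hpos, hs⟩ :=
    exists_subsuperset_card_eq hsub (card_filter_eq_one_le hf) (le_card_filter_pos hf)
  exact ⟨s, hs, fun v hv => hones (by simp [hv]), fun v hv => (mem_filter.1 (hpos hv)).2⟩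

lemma mem_indicatorsOfCard_of_fractionalSupport_eq_empty (hf : f ∈ hypersimplex V k)
    (h : fractionalSupport f = ∅) :
    f ∈ indicatorsOfCard V k := by
  have h01 : ∀ v, f v = 0 ∨ f v = 1 := fun v => by
    have hv : v ∉ fractionalSupport f := h ▸ notMem_empty v
    simp only [fractionalSupport, mem_filter, mem_univ, true_and, Set.mem_Ioo, not_and_or,
      not_lt] at hv
    have := hf.1 v
    rcases hv with hv | hv
    · exact Or.inl (le_antisymm hv this.1)
    · exact Or.inr (le_antisymm this.2 hv)
  have hfs : f = ((univ.filter fun v => f v = 1 : Finset V) : Set V).indicator 1 := by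
    ext v
    rcases h01 v with hv | hv <;> simp [hv]
  refine ⟨_, ?_, hfs⟩
  have := hf.2
  rw [hfs] at this
  simpa [Set.indicator_apply] using this

lemma removeIndicator_mem {s : Finset V} {α : ℝ} (hf : f ∈ hypersimplex V k) (hs : #s = k)
    (hin : ∀ v ∈ s, α ≤ f v) (hout : ∀ v ∉ s, f v ≤ 1 - α) (hα : α < 1) :
    removeIndicator f s α ∈ hypersimplex V k := by
  have hα' : 0 < 1 - α := sub_pos.2 hα
  refine ⟨fun v => ⟨div_nonneg ?_ hα'.le, (div_le_one hα').2 ?_⟩, ?_⟩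
  · by_cases hv : v ∈ s
    · simpa [hv] using hin v hv
    · simpa [hv] using (hf.1 v).1
  · by_cases hv : v ∈ s
    · simpa [hv] using (hf.1 v).2
    · simpa [hv] using hout v hv
  · simp only [removeIndicator, ← sum_div, sum_sub_distrib, ← mul_sum, hf.2]
    rw [div_eq_iff hα'.ne']
    simp only [Set.indicator_apply, SetLike.mem_coe, Pi.one_apply, sum_ite_mem, univ_inter,
      sum_const, hs, nsmul_eq_mul, mul_one]
    ring

lemma exists_eq_smul_add_smul (hf : f ∈ hypersimplex V k)
    (hfrac : (fractionalSupport f).Nonempty) :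
    ∃ x ∈ indicatorsOfCard V k, ∃ g ∈ hypersimplex V k, ∃ α : ℝ, 0 ≤ α ∧ α ≤ 1 ∧
      fractionalSupport g ⊂ fractionalSupport f ∧ f = α • x + (1 - α) • g := by
  obtain ⟨s, hs, hones, hpos⟩ := exists_card_eq hf
  obtain ⟨w, hw⟩ := hfrac
  -- `α = min slack` is the largest admissible weight; at the minimiser `v₀` the remainder is
  -- `0` (if `v₀ ∈ s`) or `1` (if not), so `v₀` leaves the fractional support.
  set slack : V → ℝ := fun v => if v ∈ s then f v else 1 - f v
  obtain ⟨v₀, -, hmin⟩ := exists_min_image univ slack ⟨w, mem_univ w⟩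
  set α := slack v₀
  have hin : ∀ v ∈ s, α ≤ f v := fun v hv => by simpa [slack, hv] using hmin v (mem_univ v)
  have hout : ∀ v ∉ s, f v ≤ 1 - α := fun v hv => by
    have := hmin v (mem_univ v)
    simp only [slack, hv, if_false] at this
    linarith
  have hslack_pos : ∀ v, 0 < slack v := fun v => by
    by_cases hv : v ∈ s
    · simpa [slack, hv] using hpos v hv
    · simpa [slack, hv] using lt_of_le_of_ne (hf.1 v).2 (mt (hones v) hv)
  have hα₁ : α < 1 := by
    refine (hmin w (mem_univ w)).trans_lt ?_
    simp only [fractionalSupport, mem_filter, mem_univ, true_and, Set.mem_Ioo] at hw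
    by_cases hws : w ∈ s <;> simp [slack, hws, hw.1, hw.2]
  have hv₀ : v₀ ∈ fractionalSupport f := by
    simp only [fractionalSupport, mem_filter, mem_univ, true_and, Set.mem_Ioo]
    have := hslack_pos v₀
    by_cases hv₀s : v₀ ∈ s
    · simp only [slack, α, hv₀s, if_true] at this hα₁ ⊢
      exact ⟨this, hα₁⟩
    · simp only [slack, α, hv₀s, if_false] at this hα₁ ⊢
      constructor <;> linarith
  refine ⟨_, ⟨s, hs, rfl⟩, removeIndicator f s α, removeIndicator_mem hf hs hin hout hα₁, α,
    (hslack_pos v₀).le, hα₁.le, ?_, eq_smul_indicator_add_smul_removeIndicator hα₁.ne⟩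
  rw [ssubset_iff_of_subset
    (fractionalSupport_removeIndicator_subset hin hout (hslack_pos v₀) hα₁)]
  refine ⟨v₀, hv₀, notMem_fractionalSupport_removeIndicator hα₁ ?_⟩
  by_cases hv₀s : v₀ ∈ s <;> simp [α, slack, hv₀s]

theorem subset_convexHull_indicatorsOfCard :
    hypersimplex V k ⊆ convexHull ℝ (indicatorsOfCard V k) := by
  intro f hf
  induction hn : #(fractionalSupport f) using Nat.strong_induction_on generalizing f with
  | _ n ih =>
  obtain hfrac | hfrac := (fractionalSupport f).eq_empty_or_nonempty
  · exact subset_convexHull ℝ _ (mem_indicatorsOfCard_of_fractionalSupport_eq_empty hf hfrac)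
  obtain ⟨x, hx, g, hg, α, hα₀, hα₁, hgf, rfl⟩ := exists_eq_smul_add_smul hf hfrac
  exact convex_convexHull ℝ _ (subset_convexHull ℝ _ hx)
    (ih _ (hn ▸ card_lt_card hgf) hg rfl) hα₀ (sub_nonneg.2 hα₁) (add_sub_cancel α 1)

end hypersimplex

end

theorem stmt_18 {V : Type*} [Fintype V] (P : V → ℝ) (θ : ℝ)
    (hθ₀ : 0 < θ) (hθ₁ : θ ≤ 1)
    (hPpos : ∀ v, 0 ≤ P v) (hPsum : ∑ v, P v = 1) (hPbd : ∀ v, P v ≤ θ) :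
    ∃ (n : ℕ) (α : Fin n → ℝ) (S : Fin n → Finset V),
      (∀ i, 0 ≤ α i) ∧ (∑ i, α i = 1) ∧
      (∀ i, (S i).card = ⌊1/θ⌋₊) ∧
      (∀ v, P v = ∑ i, α i * (if v ∈ S i then (1 : ℝ) / (S i).card else 0)) := by
  set k := ⌊1/θ⌋₊
  have hk : (0 : ℝ) < k := Nat.cast_pos.2 (Nat.floor_pos.2 (one_le_one_div hθ₀ hθ₁))
  have hkθ : k * θ ≤ 1 := (le_div_iff₀ hθ₀).1 (Nat.floor_le (one_div_pos.2 hθ₀).le)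
  have hkP : (fun v => k * P v) ∈ hypersimplex V k :=
    ⟨fun v => ⟨mul_nonneg hk.le (hPpos v), (mul_le_mul_of_nonneg_left (hPbd v) hk.le).trans hkθ⟩,
      by rw [← mul_sum, hPsum, mul_one]⟩
  obtain ⟨n, α, S, hα₀, hα₁, hS, hrep⟩ :=
    exists_fin_of_mem_convexHull_indicatorsOfCard
      (hypersimplex.subset_convexHull_indicatorsOfCard hkP)
  refine ⟨n, α, S, hα₀, hα₁, hS, fun v => ?_⟩
  calc P v = (k * P v) / k := by field_simp
    _ = ∑ i, α i * ((S i : Set V).indicator 1 v / k) := by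
      rw [hrep v, sum_div]; simp only [mul_div_assoc]
    _ = _ := by simp [hS, Set.indicator_apply, apply_ite (· / (k : ℝ))]
end
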